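/- arXiv:2209.09223 — 8 statements merged into one kernel-verified Lean document; each statement's English description precedes it below -/
import Mathlib

section
/- For every binary word w in {1000, 10000}^* (that is, every concatenation of copies of the blocks 1000 and 10000), the only antisquare factors of w are 01 and 10. Consequently, there exist a constant c > 0 and a real number γ > 1 such that for every n ≥ 1, the number of binary words of length n containing at most two distinct antisquare factors is at least c·γ^n. -/
/-- Bitwise complement of a binary word. -/
def comp (x : List Bool) : List Bool := x.map (fun b => !b)

/-- An antisquare is a nonempty word of the form `y ++ comp y`. -/
def Antisquare (x : List Bool) : Prop := ∃ y : List Bool, y ≠ [] ∧ x = y ++ comp y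

/-- `w` has period `p ≥ 1` if `w[i] = w[i+p]` whenever both indices are valid. -/
def HasPeriod (w : List Bool) (p : ℕ) : Prop :=
  1 ≤ p ∧ ∀ i, i + p < w.length → w.getD i false = w.getD (i + p) false

/-- The exponent of a finite word: its length divided by its least period. -/
noncomputable def exponent (w : List Bool) : ℝ :=
  (w.length : ℝ) / ((sInf {p : ℕ | HasPeriod w p} : ℕ) : ℝ)

/-- `u` is a factor of the right-infinite word `w : ℕ → Bool`. -/
def FactorInf (u : List Bool) (w : ℕ → Bool) : Prop :=
  ∃ i : ℕ, u = (List.range u.length).map (fun t => w (i + t))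

/-- `u` is a factor of the bi-infinite word `w : ℤ → Bool`. -/
def FactorBi (u : List Bool) (w : ℤ → Bool) : Prop :=
  ∃ i : ℤ, u = (List.range u.length).map (fun t => w (i + (t : ℤ)))

/-- A binary word is good if its only antisquare factors are `01` and `10`. -/
def Good (w : List Bool) : Prop :=
  ∀ u, u <:+: w → Antisquare u → u = [false, true] ∨ u = [true, false]

/-- Sparseness: any two `true`s are at distance at least 4. -/
def SpP (w : List Bool) : Prop :=
  ∀ i j, i < j → w.getD i false = true → w.getD j false = true → i + 4 ≤ j

lemma getD_replicate_false (k j : ℕ) : (List.replicate k false).getD j false = false := by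
  rcases lt_or_ge j k with h | h
  · rw [List.getD_eq_getElem _ _ (by simpa using h)]; simp
  · exact List.getD_eq_default _ _ (by simpa using h)

lemma spP_infix {u w : List Bool} (hw : SpP w) (h : u <:+: w) : SpP u := by
  obtain ⟨s, t, rfl⟩ := h
  have hw' : SpP (s ++ (u ++ t)) := by rwa [← List.append_assoc]
  intro i j hij hi hj
  have key : ∀ k, u.getD k false = true →
      (s ++ (u ++ t)).getD (s.length + k) false = true := by
    intro k hk
    have hk' : k < u.length := by
      by_contra hle
      rw [List.getD_eq_default _ _ (by omega)] at hk; simp at hk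
    rw [List.getD_append_right _ _ _ _ (Nat.le_add_right _ _)]
    simp only [Nat.add_sub_cancel_left]
    rw [List.getD_append _ _ _ _ (by omega)]
    exact hk
  have := hw' (s.length + i) (s.length + j) (by omega) (key i hi) (key j hj)
  omega

lemma blk_only {x : List Bool}
    (hx : x = [true, false, false, false] ∨ x = [true, false, false, false, false]) :
    ∀ n, x.getD n false = true → n = 0 := by
  intro n h
  have h5 : n < 5 := by
    by_contra h5
    rw [List.getD_eq_default _ _ (by rcases hx with rfl | rfl <;> simp <;> omega)] at h
    simp at h
  rcases hx with rfl | rfl <;> interval_cases n <;> revert h <;> decide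

lemma spP_blocks : ∀ (l : List (List Bool)) (k : ℕ),
    (∀ x ∈ l, x = [true, false, false, false] ∨ x = [true, false, false, false, false]) →
    SpP (l.flatten ++ true :: List.replicate k false) := by
  intro l
  induction l with
  | nil =>
    intro k _
    intro i j hij hi hj
    exfalso
    simp only [List.flatten_nil, List.nil_append] at hj
    rcases j with _ | j
    · omega
    · rw [List.getD_cons_succ, getD_replicate_false] at hj; simp at hj
  | cons x l ih =>
    intro k hmem
    have hx := hmem x (by simp)
    have hl : ∀ y ∈ l, y = [true, false, false, false] ∨ y = [true, false, false, false, false] :=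
      fun y hy => hmem y (by simp [hy])
    have hx4 : 4 ≤ x.length := by rcases hx with rfl | rfl <;> simp
    have hIH := ih k hl
    intro i j hij hi hj
    rw [List.flatten_cons, List.append_assoc] at hi hj
    rcases lt_or_ge j x.length with hj4 | hj4
    · have hi0 := blk_only hx i (by rwa [List.getD_append _ _ _ _ (by omega)] at hi)
      have hj0 := blk_only hx j (by rwa [List.getD_append _ _ _ _ hj4] at hj)
      omega
    · rcases lt_or_ge i x.length with hi4 | hi4
      · have hi0 := blk_only hx i (by rwa [List.getD_append _ _ _ _ hi4] at hi)
        omega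
      · rw [List.getD_append_right _ _ _ _ hi4] at hi
        rw [List.getD_append_right _ _ _ _ hj4] at hj
        have := hIH (i - x.length) (j - x.length) (by omega) hi hj
        omega

lemma spP_antisquare {u : List Bool} (hP : SpP u) (hA : Antisquare u) :
    u = [false, true] ∨ u = [true, false] := by
  obtain ⟨y, hy, rfl⟩ := hA
  have hm1 : 1 ≤ y.length := List.length_pos_iff.mpr hy
  have hcomp : (comp y).length = y.length := by simp [comp]
  have key : y.length ≤ 1 := by
    by_contra h2
    push_neg at h2
    set m := y.length with hm
    -- positions of `true`s
    have htrue : ∀ i : Fin m,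
        (y ++ comp y).getD (if y[(i : ℕ)] = true then (i : ℕ) else m + i) false = true := by
      intro i
      by_cases hb : y[(i : ℕ)] = true
      · rw [if_pos hb, List.getD_append _ _ _ _ (by omega)]
        rw [List.getD_eq_getElem _ _ (by omega)]
        exact hb
      · rw [if_neg hb, List.getD_append_right _ _ _ _ (by omega)]
        have hlt : (m + i) - y.length < (comp y).length := by omega
        rw [List.getD_eq_getElem _ _ hlt]
        have : (m + (i : ℕ)) - y.length = (i : ℕ) := by omega
        simp only [this] at hlt ⊢
        simp only [comp, List.getElem_map]
        simp [Bool.not_eq_true] at hb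
        simp [hb]
    set f : Fin m → ℕ := fun i => if y[(i : ℕ)] = true then (i : ℕ) else m + i with hf
    have hlt2m : ∀ i : Fin m, f i < 2 * m := by
      intro i; simp only [hf]; split <;> omega
    have hne : ∀ i j : Fin m, i ≠ j → f i ≠ f j := by
      intro i j hij
      have hi := i.2; have hj := j.2
      have : (i : ℕ) ≠ (j : ℕ) := fun h => hij (Fin.ext h)
      simp only [hf]; split <;> split <;> omega
    have hgap : ∀ i j : Fin m, i ≠ j → f i + 4 ≤ f j ∨ f j + 4 ≤ f i := by
      intro i j hij
      rcases lt_or_gt_of_ne (hne i j hij) with h | h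
      · exact Or.inl (hP _ _ h (htrue i) (htrue j))
      · exact Or.inr (hP _ _ h (htrue j) (htrue i))
    set g : Fin m → Fin ((2 * m - 1) / 4 + 1) := fun i => ⟨f i / 4, by have := hlt2m i; omega⟩
    have hginj : Function.Injective g := by
      intro i j hgij
      by_contra hij
      have h4 := hgap i j hij
      have : f i / 4 = f j / 4 := congrArg Fin.val hgij
      omega
    have hcard := Fintype.card_le_of_injective g hginj
    simp only [Fintype.card_fin] at hcard
    omega
  have : y.length = 1 := le_antisymm key hm1
  obtain ⟨b, rfl⟩ := List.length_eq_one_iff.mp this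
  cases b
  · left; rfl
  · right; rfl

/-- The block coding. -/
def blk (b : Bool) : List Bool :=
  if b then [true, false, false, false, false] else [true, false, false, false]

def base (s : List Bool) : List Bool := (s.map blk).flatten ++ [true]

lemma base_cons (b : Bool) (s : List Bool) : base (b :: s) = blk b ++ base s := by
  simp [base]

lemma base_getD0 (s : List Bool) (t : List Bool) : (base s ++ t).getD 0 false = true := by
  cases s with
  | nil => rfl
  | cons b s => rw [base_cons]; cases b <;> rfl

lemma blk_mem (b : Bool) :
    blk b = [true, false, false, false] ∨ blk b = [true, false, false, false, false] := by
  cases b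
  · left; rfl
  · right; rfl

lemma base_ne (r r' : List Bool) (j j' : ℕ) :
    blk false ++ (base r ++ List.replicate j false) ≠
    blk true ++ (base r' ++ List.replicate j' false) := by
  intro h
  have hL : (blk false ++ (base r ++ List.replicate j false)).getD 4 false = true := by
    rw [List.getD_append_right _ _ _ _ (by simp [blk])]
    simpa [blk] using base_getD0 r (List.replicate j false)
  have hR : (blk true ++ (base r' ++ List.replicate j' false)).getD 4 false = false := by
    rw [List.getD_append _ _ _ _ (by simp [blk])]
    rfl
  rw [h, hR] at hL
  simp at hL

lemma base_ne_nil (b : Bool) (r : List Bool) (j j' : ℕ) :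
    base [] ++ List.replicate j false ≠
    blk b ++ (base r ++ List.replicate j' false) := by
  intro h
  have hlen : 1 ≤ (blk b).length := by cases b <;> simp [blk]
  have hR : (blk b ++ (base r ++ List.replicate j' false)).getD (blk b).length false = true := by
    rw [List.getD_append_right _ _ _ _ le_rfl]
    simpa using base_getD0 r (List.replicate j' false)
  have hL : (base [] ++ List.replicate j false).getD (blk b).length false = false := by
    show (([true] : List Bool) ++ List.replicate j false).getD (blk b).length false = false
    rw [List.getD_append_right _ _ _ _ (by simpa using hlen)]
    exact getD_replicate_false _ _
  rw [h, hR] at hL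
  simp at hL

lemma base_inj : ∀ (s s' : List Bool) (j j' : ℕ),
    base s ++ List.replicate j false = base s' ++ List.replicate j' false → s = s' := by
  intro s
  induction s with
  | nil =>
    intro s' j j' h
    cases s' with
    | nil => rfl
    | cons b' r' =>
      exfalso
      rw [base_cons, List.append_assoc] at h
      exact base_ne_nil b' r' j j' h
  | cons b r ih =>
    intro s' j j' h
    cases s' with
    | nil =>
      exfalso
      rw [base_cons, List.append_assoc] at h
      exact base_ne_nil b r j' j h.symm
    | cons b' r' =>
      rw [base_cons, base_cons, List.append_assoc, List.append_assoc] at h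
      cases b <;> cases b'
      · have := List.append_cancel_left h
        rw [ih r' j j' this]
      · exact absurd h (base_ne r r' j j')
      · exact absurd h.symm (base_ne r' r j' j)
      · have := List.append_cancel_left h
        rw [ih r' j j' this]

lemma base_length_le (s : List Bool) : (base s).length ≤ 5 * s.length + 1 := by
  induction s with
  | nil => simp [base]
  | cons b r ih =>
    rw [base_cons, List.length_append]
    cases b <;> simp [blk] at * <;> omega

lemma spP_base_pad (s : List Bool) (k : ℕ) :
    SpP (base s ++ List.replicate k false) := by
  have h : base s ++ List.replicate k false =
      (s.map blk).flatten ++ true :: List.replicate k false := by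
    simp [base]
  rw [h]
  apply spP_blocks
  intro x hx
  obtain ⟨b, _, rfl⟩ := List.mem_map.mp hx
  exact blk_mem b

/-- every word in {1000, 10000}^* has only `01` and `10` as antisquare
factors; consequently, the number of binary words of length `n` with at most two
distinct antisquare factors grows at least exponentially. -/
theorem stmt_0 :
    (∀ w : List Bool,
      (∃ l : List (List Bool),
        (∀ x ∈ l, x = [true, false, false, false] ∨ x = [true, false, false, false, false]) ∧
        w = l.flatten) →
      ∀ u, u <:+: w → Antisquare u → u = [false, true] ∨ u = [true, false]) ∧
    (∃ c γ : ℝ, 0 < c ∧ 1 < γ ∧ ∀ n : ℕ, 1 ≤ n →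
      c * γ ^ n ≤
        (({w : List Bool | w.length = n ∧
          ∃ a b : List Bool, ∀ u, Antisquare u → u <:+: w → u = a ∨ u = b}).ncard : ℝ)) := by
  constructor
  · rintro w ⟨l, hl, rfl⟩ u hu hA
    have hP : SpP (l.flatten ++ true :: List.replicate 0 false) := spP_blocks l 0 hl
    have hinf : l.flatten <:+: l.flatten ++ true :: List.replicate 0 false :=
      ⟨[], true :: List.replicate 0 false, by simp⟩
    exact spP_antisquare (spP_infix (spP_infix hP hinf) hu) hA
  · refine ⟨1/2, (2 : ℝ) ^ ((1 : ℝ)/5), by norm_num, ?_, ?_⟩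
    · rw [show (1:ℝ) = (2:ℝ) ^ (0:ℝ) by simp]
      exact Real.rpow_lt_rpow_left_iff (by norm_num) |>.mpr (by norm_num)
    intro n hn
    set m := (n - 1) / 5 with hm
    set S := {w : List Bool | w.length = n ∧
          ∃ a b : List Bool, ∀ u, Antisquare u → u <:+: w → u = a ∨ u = b} with hS
    set T := {s : List Bool | s.length = m} with hT
    have h5m : 5 * m + 1 ≤ n := by omega
    set Φ : List Bool → List Bool := fun s => base s ++ List.replicate (n - (base s).length) false
      with hΦ
    have hmaps : ∀ s ∈ T, Φ s ∈ S := by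
      intro s hs
      have hsl : s.length = m := hs
      have hblen : (base s).length ≤ n := le_trans (base_length_le s) (by omega)
      constructor
      · simp only [hΦ, List.length_append, List.length_replicate]; omega
      · refine ⟨[false, true], [true, false], fun u hA hu => ?_⟩
        exact spP_antisquare (spP_infix (spP_base_pad s _) hu) hA
    have hinj : Function.Injective Φ := by
      intro s s' h
      exact base_inj s s' _ _ h
    have hfin : S.Finite := (List.finite_length_eq Bool n).subset (fun w hw => hw.1)
    have hsub : Φ '' T ⊆ S := by rintro _ ⟨s, hs, rfl⟩; exact hmaps s hs
    have hTcard : T.ncard = 2 ^ m := by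
      rw [← Nat.card_coe_set_eq]
      have e : ↥T ≃ List.Vector Bool m := Equiv.subtypeEquivRight (fun _ => Iff.rfl)
      rw [Nat.card_congr e, Nat.card_eq_fintype_card, card_vector]
      simp
    have hcount : 2 ^ m ≤ S.ncard := by
      calc 2 ^ m = T.ncard := hTcard.symm
        _ = (Φ '' T).ncard := (Set.ncard_image_of_injective T hinj).symm
        _ ≤ S.ncard := Set.ncard_le_ncard hsub hfin
    have hcast : ((2 : ℝ) ^ m : ℝ) ≤ (S.ncard : ℝ) := by
      calc ((2:ℝ) ^ m) = ((2^m : ℕ) : ℝ) := by push_cast; ring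
        _ ≤ (S.ncard : ℝ) := Nat.cast_le.mpr hcount
    refine le_trans ?_ hcast
    have hpow : ((2:ℝ) ^ ((1:ℝ)/5)) ^ n = (2:ℝ) ^ ((n:ℝ)/5) := by
      rw [← Real.rpow_natCast ((2:ℝ) ^ ((1:ℝ)/5)) n, ← Real.rpow_mul (by norm_num)]
      ring_nf
    rw [hpow]
    have hnm : (n : ℝ) / 5 ≤ (m : ℝ) + 1 := by
      have : n ≤ 5 * m + 5 := by omega
      have h5 : (n : ℝ) ≤ 5 * (m : ℝ) + 5 := by exact_mod_cast this
      linarith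
    have h1 : (2:ℝ) ^ ((n:ℝ)/5) ≤ (2:ℝ) ^ ((m:ℝ) + 1) :=
      (Real.rpow_le_rpow_left_iff (by norm_num)).mpr hnm
    have h2 : (2:ℝ) ^ ((m:ℝ) + 1) = 2 * (2:ℝ) ^ (m:ℝ) := by
      rw [Real.rpow_add (by norm_num), Real.rpow_one]; ring
    have h3 : (2:ℝ) ^ ((m:ℝ)) = (2:ℝ) ^ m := Real.rpow_natCast 2 m
    rw [h2, h3] at h1
    linarith
end

section
/- The set of right-infinite binary words that contain at most two distinct antisquare factors is uncountable. -/
/-!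
An antisquare `y ȳ` contains exactly `|y|` ones, half of its length. In a word whose ones are
at least four positions apart, a factor of length `2n` contains at most `(2n + 3) / 4` ones,
so its antisquare factors have order `1`, i.e. they are `01` and `10`. Spreading an arbitrary
sequence `s : ℕ → Bool` out to the multiples of four gives such a word, injectively in `s`.
-/

open Finset

theorem Finset.mul_card_le_of_separated {d L : ℕ} (S : Finset ℕ)
    (hsep : ∀ x ∈ S, ∀ y ∈ S, x < y → x + d ≤ y) (hlt : ∀ x ∈ S, x < L) :
    d * #S ≤ L + d - 1 := by
  induction S using Finset.induction_on_max generalizing L with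
  | empty => simp
  | insert m T hTm ih =>
    have hm : m < L := hlt m (mem_insert_self m T)
    rw [card_insert_of_notMem fun h => (hTm m h).false, mul_add_one]
    rcases T.eq_empty_or_nonempty with rfl | ⟨x, hx⟩
    · simp only [card_empty, mul_zero]
      omega
    have hTm' : ∀ y ∈ T, y + d ≤ m := fun y hy =>
      hsep y (mem_insert_of_mem hy) m (mem_insert_self m T) (hTm y hy)
    have hT : d * #T ≤ (m + 1 - d) + d - 1 :=
      ih (fun y hy z hz => hsep y (mem_insert_of_mem hy) z (mem_insert_of_mem hz))
        fun y hy => by have := hTm' y hy; omega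
    have := hTm' x hx
    omega

theorem count_true_append_comp (y : List Bool) : (y ++ comp y).count true = y.length := by
  have hcomp : (comp y).count true = y.count false :=
    List.count_map_of_injective y _ Bool.not_injective false
  rw [List.count_append, hcomp, List.count_true_add_count_false]

theorem count_true_map_range (w : ℕ → Bool) (i L : ℕ) :
    ((List.range L).map fun t => w (i + t)).count true = #{t ∈ range L | w (i + t) = true} := by
  rw [List.count_eq_countP, List.countP_map, List.countP_eq_length_filter]
  rfl

theorem Antisquare.eq_of_factorInf_of_separated {w : ℕ → Bool}
    (hw : ∀ a b, w a = true → w b = true → a < b → a + 4 ≤ b) {u : List Bool}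
    (hu : Antisquare u) (hf : FactorInf u w) : u = [false, true] ∨ u = [true, false] := by
  obtain ⟨y, hy, rfl⟩ := hu
  obtain ⟨i, hi⟩ := hf
  have hlen : (y ++ comp y).length = 2 * y.length := by
    simp only [comp, List.length_append, List.length_map]
    ring
  have hones := count_true_map_range w i (y ++ comp y).length
  rw [← hi, count_true_append_comp, hlen] at hones
  have hbound := Finset.mul_card_le_of_separated (d := 4) (L := 2 * y.length)
    {t ∈ range (2 * y.length) | w (i + t) = true}
    (fun a ha b hb hab => by
      have := hw (i + a) (i + b) (mem_filter.1 ha).2 (mem_filter.1 hb).2 (by omega)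
      omega)
    fun a ha => mem_range.1 (mem_filter.1 ha).1
  rw [← hones] at hbound
  have hy1 : y.length = 1 := by
    have := List.length_pos_iff.2 hy
    omega
  obtain ⟨c, rfl⟩ := List.length_eq_one_iff.1 hy1
  cases c <;> simp [comp]

def spread (d : ℕ) (s : ℕ → Bool) (m : ℕ) : Bool := decide (m % d = 0) && s (m / d)

theorem spread_mul {d : ℕ} (hd : 0 < d) (s : ℕ → Bool) (k : ℕ) : spread d s (d * k) = s k := by
  simp [spread, Nat.mul_div_cancel_left k hd]

theorem spread_injective {d : ℕ} (hd : 0 < d) : Function.Injective (spread d) := fun s s' h =>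
  funext fun k => by rw [← spread_mul hd s k, ← spread_mul hd s' k, h]

theorem spread_separated {d : ℕ} {s : ℕ → Bool} {a b : ℕ} (ha : spread d s a = true)
    (hb : spread d s b = true) (hab : a < b) : a + d ≤ b := by
  simp only [spread, Bool.and_eq_true, decide_eq_true_eq] at ha hb
  have hdvd : d ∣ b - a := Nat.dvd_sub (Nat.dvd_of_mod_eq_zero hb.1) (Nat.dvd_of_mod_eq_zero ha.1)
  have := Nat.le_of_dvd (by omega) hdvd
  omega

theorem not_countable_range_of_injective {α : Type*} {f : (ℕ → Bool) → α}
    (hf : Function.Injective f) : ¬ (Set.range f).Countable := by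
  intro hrange
  have := hrange.to_subtype
  have hcount : Countable (ℕ → Bool) := (Equiv.ofInjective f hf).injective.countable
  rw [← Cardinal.mk_le_aleph0_iff, ← Cardinal.power_def, Cardinal.mk_bool, Cardinal.mk_nat] at hcount
  exact (Cardinal.cantor _).not_ge hcount

/-- the set of right-infinite binary words containing at most two
distinct antisquare factors is uncountable. -/
theorem stmt_1 :
    ¬ ({w : ℕ → Bool | ∃ a b : List Bool,
        ∀ u, Antisquare u → FactorInf u w → u = a ∨ u = b}).Countable := by
  intro hcountable
  have hsub : Set.range (spread 4) ⊆ {w : ℕ → Bool | ∃ a b : List Bool,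
      ∀ u, Antisquare u → FactorInf u w → u = a ∨ u = b} := by
    rintro _ ⟨s, rfl⟩
    exact ⟨[false, true], [true, false], fun u hu hf =>
      hu.eq_of_factorInf_of_separated (fun _ _ => spread_separated) hf⟩
  exact not_countable_range_of_injective (spread_injective four_pos) (hcountable.mono hsub)
end

section
/- Let φ be the morphism 0→001, 1→01, let φ^ω(0) be its unique infinite fixed point beginning with 0, let g be the morphism 0→01, 1→11, and let w = g(φ^ω(0)). Then w contains no antisquare factor other than 01 and 10, and the critical exponent of w equals 2 + α, where α = (1+√5)/2 is the golden ratio. -/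
/-- Apply a morphism (given on letters) to a word. -/
def applyM (m : Bool → List Bool) (w : List Bool) : List Bool := (w.map m).flatten

/-- The morphism φ: 0 → 001, 1 → 01. -/
def phiM : Bool → List Bool := fun b => if b then [false, true] else [false, false, true]

/-- The morphism g: 0 → 01, 1 → 11. -/
def gM : Bool → List Bool := fun b => if b then [true, true] else [false, true]

/-- Iterates of φ starting from 0; their limit is the fixed point φ^ω(0). -/
def phiIter : ℕ → List Bool
  | 0 => [false]
  | n + 1 => applyM phiM (phiIter n)

/-- The factors of the infinite word w = g(φ^ω(0)): since each `phiIter n` is a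
prefix of `φ^ω(0)`, these are exactly the factors of some `g(φ^n(0))`. -/
def WFactor (u : List Bool) : Prop := ∃ n, u <:+: applyM gM (phiIter n)

noncomputable section

open Real goldenRatio

namespace GoldenSturmian

lemma applyM_cons (m : Bool → List Bool) (a : Bool) (l : List Bool) :
    applyM m (a :: l) = m a ++ applyM m l := by
  simp [applyM]

lemma getD_map_range {w : ℕ → Bool} {i L t : ℕ} (ht : t < L) :
    ((List.range L).map fun s => w (i + s)).getD t false = w (i + t) := by
  rw [List.getD_eq_getElem _ _ (by simpa using ht), List.getElem_map, List.getElem_range]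

lemma hasPeriod_map_range_iff {w : ℕ → Bool} {i L p : ℕ} :
    HasPeriod ((List.range L).map fun s => w (i + s)) p ↔
      1 ≤ p ∧ ∀ t, t + p < L → w (i + t) = w (i + t + p) := by
  simp only [HasPeriod, List.length_map, List.length_range]
  refine and_congr_right fun _ => forall_congr' fun t => imp_congr_right fun ht => ?_
  rw [getD_map_range (by omega), getD_map_range ht, add_assoc]

lemma hasPeriod_length {u : List Bool} (hu : u ≠ []) : HasPeriod u u.length :=
  ⟨List.length_pos_iff.mpr hu, fun _ h => absurd h (by omega)⟩

lemma exponent_le {u : List Bool} {C : ℝ} (hu : u ≠ [])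
    (h : ∀ p, HasPeriod u p → (u.length : ℝ) ≤ C * p) : exponent u ≤ C := by
  have hmem := Nat.sInf_mem (s := {p | HasPeriod u p}) ⟨_, hasPeriod_length hu⟩
  have hpos : (0 : ℝ) < sInf {p | HasPeriod u p} := by exact_mod_cast hmem.1
  rw [exponent, div_le_iff₀ hpos]
  exact h _ hmem

lemma div_le_exponent {u : List Bool} {p : ℕ} (h : HasPeriod u p) :
    (u.length : ℝ) / p ≤ exponent u := by
  have hmem := Nat.sInf_mem (s := {p | HasPeriod u p}) ⟨p, h⟩
  have hpos : (0 : ℝ) < sInf {p | HasPeriod u p} := by exact_mod_cast hmem.1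
  have hle : sInf {p | HasPeriod u p} ≤ p := Nat.sInf_le h
  exact div_le_div_of_nonneg_left (Nat.cast_nonneg _) hpos (by exact_mod_cast hle)

lemma goldenRatio_gt : (1.615 : ℝ) < φ := by
  show (1.615 : ℝ) < (1 + √5) / 2
  have := Real.sq_sqrt (show (0 : ℝ) ≤ 5 by norm_num)
  nlinarith [Real.sqrt_nonneg 5]

lemma goldenRatio_lt : φ < 1.62 := by
  show (1 + √5) / 2 < (1.62 : ℝ)
  have := Real.sq_sqrt (show (0 : ℝ) ≤ 5 by norm_num)
  nlinarith [Real.sqrt_nonneg 5]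

lemma abs_goldenConj : |ψ| = φ - 1 := by
  rw [abs_of_neg goldenConj_neg, ← one_sub_goldenConj]; ring

lemma abs_goldenConj_pos : 0 < |ψ| := abs_pos.mpr goldenConj_ne_zero

lemma abs_goldenConj_lt_one : |ψ| < 1 := by
  rw [abs_goldenConj]; linarith [goldenRatio_lt_two]

lemma abs_goldenConj_pow_eq_add (k : ℕ) : |ψ| ^ k = |ψ| ^ (k + 1) + |ψ| ^ (k + 2) := by
  have h : |ψ| + |ψ| ^ 2 = 1 := by rw [abs_goldenConj]; nlinarith [goldenRatio_sq]
  linear_combination (-|ψ| ^ k) * h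

lemma abs_goldenConj_pow_anti {k l : ℕ} (h : k ≤ l) : |ψ| ^ l ≤ |ψ| ^ k :=
  pow_le_pow_of_le_one abs_goldenConj_pos.le abs_goldenConj_lt_one.le h

lemma abs_goldenConj_pow_strictAnti {k l : ℕ} (h : k < l) : |ψ| ^ l < |ψ| ^ k :=
  pow_lt_pow_right_of_lt_one₀ abs_goldenConj_pos abs_goldenConj_lt_one h

lemma abs_goldenConj_pow_three : |ψ| ^ 3 = 2 * φ - 3 := by
  rw [abs_goldenConj]; linear_combination (φ - 2) * goldenRatio_sq

lemma abs_goldenConj_pow_lt_half {k : ℕ} (hk : 2 ≤ k) : |ψ| ^ k < 1 / 2 := by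
  calc |ψ| ^ k ≤ |ψ| ^ 2 := abs_goldenConj_pow_anti hk
    _ < 1 / 2 := by rw [abs_goldenConj]; nlinarith [goldenRatio_sq, goldenRatio_gt]

lemma goldenConj_pow_of_even {k : ℕ} (hk : Even k) : ψ ^ k = |ψ| ^ k := (hk.pow_abs ψ).symm

lemma goldenConj_pow_of_odd {k : ℕ} (hk : Odd k) : ψ ^ k = -|ψ| ^ k := by
  rw [abs_of_neg goldenConj_neg, hk.neg_pow, neg_neg]

/-- The slope `β = 2 - φ = 1/φ²` of the Sturmian word `φ^ω(0)`. -/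
def slope : ℝ := 2 - φ

lemma slope_eq : slope = |ψ| ^ 2 := by
  rw [slope, abs_goldenConj]; linear_combination -goldenRatio_sq

lemma slope_pos : 0 < slope := by rw [slope_eq]; exact pow_pos abs_goldenConj_pos 2

lemma slope_lt_half : slope < 1 / 2 := by rw [slope_eq]; exact abs_goldenConj_pow_lt_half le_rfl

lemma one_lt_three_mul_slope : 1 < 3 * slope := by rw [slope]; linarith [goldenRatio_lt]

lemma slope_mul_one_add_goldenRatio : slope * (1 + φ) = 1 := by
  rw [slope]; linear_combination -goldenRatio_sq

lemma slope_irrational : Irrational slope := by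
  simpa [slope] using goldenRatio_irrational.intCast_sub 2

lemma fib_mul_goldenRatio (k : ℕ) : (Nat.fib k : ℝ) * φ = Nat.fib (k + 1) - ψ ^ k := by
  linear_combination -fib_succ_sub_goldenRatio_mul_fib k

lemma fib_mul_goldenRatio_of_even {k : ℕ} (hk : Even k) :
    (Nat.fib k : ℝ) * φ = Nat.fib (k + 1) - |ψ| ^ k := by
  rw [fib_mul_goldenRatio, goldenConj_pow_of_even hk]

/-! ### Distance to the nearest integer -/

lemma fract_eq_sub_one {x : ℝ} (h1 : 1 ≤ x) (h2 : x < 2) : Int.fract x = x - 1 := by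
  rw [Int.fract_eq_iff]; exact ⟨by linarith, by linarith, 1, by push_cast; ring⟩

lemma fract_eq_of_eq_intCast_add {x y : ℝ} (m : ℤ) (h : x = m + y) (h0 : 0 ≤ y) (h1 : y < 1) :
    Int.fract x = y := by
  rw [h, Int.fract_intCast_add, Int.fract_eq_self.mpr ⟨h0, h1⟩]

def distToInt (x : ℝ) : ℝ := |x - round x|

lemma distToInt_le (x : ℝ) (m : ℤ) : distToInt x ≤ |x - m| := round_le x m

lemma distToInt_eq_min (x : ℝ) : distToInt x = min (Int.fract x) (1 - Int.fract x) :=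
  abs_sub_round_eq_min x

lemma distToInt_eq_of_abs_sub_lt {x : ℝ} {m : ℤ} (h : |x - m| < 1 / 2) :
    distToInt x = |x - m| := by
  have hround : |((round x - m : ℤ) : ℝ)| < 1 := by
    calc |((round x - m : ℤ) : ℝ)| = |(x - m) - (x - round x)| := by push_cast; ring_nf
      _ ≤ |x - m| + |x - round x| := abs_sub _ _
      _ < 1 := by linarith [distToInt_le x m, show distToInt x = |x - round x| from rfl]
  have : round x = m := by
    have := abs_lt.mp (by exact_mod_cast hround : |round x - m| < 1)
    omega
  rw [distToInt, this]

lemma distToInt_add_le (x y : ℝ) : distToInt (x + y) ≤ distToInt x + distToInt y :=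
  calc distToInt (x + y) ≤ |x + y - ((round x + round y : ℤ) : ℝ)| := distToInt_le _ _
    _ = |(x - round x) + (y - round y)| := by push_cast; ring_nf
    _ ≤ distToInt x + distToInt y := abs_add_le _ _

lemma distToInt_intCast_sub (k : ℤ) (x : ℝ) : distToInt (k - x) = distToInt x := by
  have key : ∀ (k : ℤ) (x : ℝ), distToInt (k - x) ≤ distToInt x := fun k x =>
    calc distToInt (k - x) ≤ |k - x - ((k - round x : ℤ) : ℝ)| := distToInt_le _ _
      _ = distToInt x := by rw [distToInt, ← abs_neg]; push_cast; ring_nf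
  refine le_antisymm (key k x) ?_
  simpa using key k (k - x)

lemma distToInt_sub_le (x y : ℝ) : distToInt x - distToInt y ≤ distToInt (x + y) := by
  have := distToInt_add_le (x + y) (0 - y)
  rw [show x + y + (0 - y) = x by ring, ← Int.cast_zero, distToInt_intCast_sub] at this
  linarith

lemma distToInt_fib_mul_goldenRatio {k : ℕ} (hk : 2 ≤ k) :
    distToInt (Nat.fib k * φ) = |ψ| ^ k := by
  have h : |(Nat.fib k : ℝ) * φ - ((Nat.fib (k + 1) : ℤ) : ℝ)| = |ψ| ^ k := by
    rw [fib_mul_goldenRatio]; push_cast; rw [sub_sub_cancel_left, abs_neg, abs_pow]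
  rw [distToInt_eq_of_abs_sub_lt (h ▸ abs_goldenConj_pow_lt_half hk), h]

/-! ### Fibonacci numbers are the best approximation denominators of `φ` -/

lemma distToInt_sub_le_add_fib (r : ℕ) {a : ℕ} (ha : 2 ≤ a) :
    distToInt (r * φ) - |ψ| ^ a ≤ distToInt ((r + Nat.fib a : ℕ) * φ) := by
  have h := distToInt_sub_le (r * φ) (Nat.fib a * φ)
  rwa [distToInt_fib_mul_goldenRatio ha, ← add_mul, ← Nat.cast_add] at h

lemma le_distToInt_add_fib {m r : ℕ} (hr : |ψ| ^ m ≤ distToInt (r * φ)) :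
    |ψ| ^ (m + 1) ≤ distToInt ((r + Nat.fib (m + 2) : ℕ) * φ) := by
  linarith [distToInt_sub_le_add_fib r (a := m + 2) (by omega), abs_goldenConj_pow_eq_add m]

lemma abs_goldenConj_pow_le_distToInt :
    ∀ (m q : ℕ), 1 ≤ q → q < Nat.fib (m + 1) → |ψ| ^ m ≤ distToInt (q * φ)
  | 0, q, h1, h2 | 1, q, h1, h2 => by simp at h2; omega
  | m + 2, q, h1, h2 => by
    rcases lt_trichotomy q (Nat.fib (m + 2)) with hlt | rfl | hgt
    · exact (abs_goldenConj_pow_anti (by omega)).trans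
        (abs_goldenConj_pow_le_distToInt (m + 1) q h1 hlt)
    · rw [distToInt_fib_mul_goldenRatio (by omega)]
    · have hfib : Nat.fib (m + 2 + 1) = Nat.fib (m + 1) + Nat.fib (m + 2) := Nat.fib_add_two
      obtain ⟨r, rfl⟩ : ∃ r, q = r + Nat.fib (m + 2) := ⟨q - Nat.fib (m + 2), by omega⟩
      have := le_distToInt_add_fib (abs_goldenConj_pow_le_distToInt m r (by omega) (by omega))
      exact (abs_goldenConj_pow_anti (by omega)).trans this

lemma abs_goldenConj_pow_le_distToInt_of_ne {m q : ℕ} (h1 : 1 ≤ q) (h2 : q < Nat.fib (m + 3))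
    (hne : q ≠ Nat.fib (m + 2)) : |ψ| ^ (m + 1) ≤ distToInt (q * φ) := by
  rcases lt_or_gt_of_ne hne with hlt | hgt
  · exact abs_goldenConj_pow_le_distToInt (m + 1) q h1 hlt
  · have hfib : Nat.fib (m + 3) = Nat.fib (m + 1) + Nat.fib (m + 2) := Nat.fib_add_two
    obtain ⟨r, rfl⟩ : ∃ r, q = r + Nat.fib (m + 2) := ⟨q - Nat.fib (m + 2), by omega⟩
    exact le_distToInt_add_fib (abs_goldenConj_pow_le_distToInt m r (by omega) (by omega))

lemma fib_le_of_distToInt_lt {m q : ℕ} (hq : 1 ≤ q) (h : distToInt (q * φ) < |ψ| ^ m) :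
    Nat.fib (m + 1) ≤ q := by
  by_contra! hlt
  exact (abs_goldenConj_pow_le_distToInt m q hq hlt).not_gt h

/-! ### The rotation by `β` -/

def orbit (j : ℕ) : ℝ := Int.fract (j * slope)

lemma orbit_nonneg (j : ℕ) : 0 ≤ orbit j := Int.fract_nonneg _

lemma orbit_lt_one (j : ℕ) : orbit j < 1 := Int.fract_lt_one _

@[simp] lemma orbit_zero : orbit 0 = 0 := by simp [orbit]

lemma orbit_add (j t : ℕ) : orbit (j + t) = Int.fract (orbit j + orbit t) := by
  rw [orbit, orbit, orbit, Int.fract_eq_fract]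
  exact ⟨⌊(j : ℝ) * slope⌋ + ⌊(t : ℝ) * slope⌋, by push_cast [Int.fract]; ring⟩

lemma orbit_one : orbit 1 = slope := by
  rw [orbit, Nat.cast_one, one_mul,
    Int.fract_eq_self.mpr ⟨slope_pos.le, by linarith [slope_lt_half]⟩]

lemma orbit_succ (j : ℕ) : orbit (j + 1) = Int.fract (orbit j + slope) := by
  rw [orbit_add, orbit_one]

lemma orbit_pos {j : ℕ} (hj : 1 ≤ j) : 0 < orbit j :=
  Int.fract_pos.mpr fun h => (slope_irrational.natCast_mul (by omega)).ne_int _ h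

lemma distToInt_mul_goldenRatio (q : ℕ) : distToInt (q * φ) = min (orbit q) (1 - orbit q) := by
  rw [orbit, ← distToInt_eq_min, show (q : ℝ) * slope = ((2 * q : ℤ) : ℝ) - q * φ by
    push_cast [slope]; ring, distToInt_intCast_sub]

lemma orbit_fib (k : ℕ) : orbit (Nat.fib k) = Int.fract (ψ ^ k) := by
  rw [orbit, show (Nat.fib k : ℝ) * slope = ((2 * Nat.fib k - Nat.fib (k + 1) : ℤ) : ℝ) + ψ ^ k by
    push_cast [slope]; linear_combination -fib_mul_goldenRatio k, Int.fract_intCast_add]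

lemma orbit_fib_of_even {k : ℕ} (hk : 2 ≤ k) (he : Even k) : orbit (Nat.fib k) = |ψ| ^ k := by
  rw [orbit_fib, goldenConj_pow_of_even he,
    Int.fract_eq_self.mpr ⟨by positivity, by linarith [abs_goldenConj_pow_lt_half hk]⟩]

lemma orbit_fib_of_odd {k : ℕ} (ho : Odd k) : orbit (Nat.fib k) = 1 - |ψ| ^ k := by
  have hlt : |ψ| ^ k < 1 := pow_lt_one₀ (abs_nonneg _) abs_goldenConj_lt_one ho.pos.ne'
  rw [orbit_fib, goldenConj_pow_of_odd ho]
  exact fract_eq_of_eq_intCast_add (-1) (by push_cast; ring) (by linarith)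
    (by linarith [pow_pos abs_goldenConj_pos k])

/-- Of the two steps `F (m+1)` and `F (m+2)`, the one of even index moves the orbit forward by
`a`, the other one backward by `b`, with `a + b = |ψ| ^ m`. -/
lemma exists_fib_steps {m : ℕ} (hm : 1 ≤ m) :
    ∃ t₁ t₂ : ℕ, 1 ≤ t₁ ∧ t₁ ≤ Nat.fib (m + 2) ∧ 1 ≤ t₂ ∧ t₂ ≤ Nat.fib (m + 2) ∧
      ∃ a b : ℝ, 0 < a ∧ 0 < b ∧ a + b = |ψ| ^ m ∧ orbit t₁ = a ∧ orbit t₂ = 1 - b := by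
  have h1 : 1 ≤ Nat.fib (m + 1) := Nat.fib_pos.mpr (by omega)
  have h12 : Nat.fib (m + 1) ≤ Nat.fib (m + 2) := Nat.fib_le_fib_succ
  have hrec := abs_goldenConj_pow_eq_add m
  have hpos := abs_goldenConj_pos
  rcases Nat.even_or_odd m with he | ho
  · exact ⟨_, _, by omega, le_rfl, h1, h12, _, _, by positivity, by positivity,
      by rw [hrec, add_comm], orbit_fib_of_even (by omega) (he.add (by decide)),
      orbit_fib_of_odd he.add_one⟩
  · exact ⟨_, _, h1, h12, by omega, le_rfl, _, _, by positivity, by positivity, hrec.symm,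
      orbit_fib_of_even (by omega) ho.add_one, orbit_fib_of_odd (ho.add_even (by decide))⟩

lemma exists_orbit_lt_return {m j : ℕ} (hm : 1 ≤ m) (hj : orbit j < |ψ| ^ m) :
    ∃ t, 1 ≤ t ∧ t ≤ Nat.fib (m + 2) ∧ orbit (j + t) < |ψ| ^ m := by
  obtain ⟨t₁, t₂, ht₁, ht₁', ht₂, ht₂', a, b, ha, hb, hab, h₁, h₂⟩ := exists_fib_steps hm
  have hlt : |ψ| ^ m < 1 := pow_lt_one₀ (abs_nonneg _) abs_goldenConj_lt_one (by omega)
  have h0 := orbit_nonneg j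
  rcases lt_or_ge (orbit j) b with hjb | hjb
  · refine ⟨t₁, ht₁, ht₁', ?_⟩
    rw [orbit_add, h₁, Int.fract_eq_self.mpr ⟨by linarith, by linarith⟩]
    linarith
  · refine ⟨t₂, ht₂, ht₂', ?_⟩
    rw [orbit_add, h₂, fract_eq_sub_one (by linarith) (by linarith [orbit_lt_one j])]
    linarith

lemma exists_one_sub_le_orbit_return {m j : ℕ} (hm : 1 ≤ m) (hj : 1 - |ψ| ^ m ≤ orbit j) :
    ∃ t, 1 ≤ t ∧ t ≤ Nat.fib (m + 2) ∧ 1 - |ψ| ^ m ≤ orbit (j + t) := by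
  obtain ⟨t₁, t₂, ht₁, ht₁', ht₂, ht₂', a, b, ha, hb, hab, h₁, h₂⟩ := exists_fib_steps hm
  have hlt : |ψ| ^ m < 1 := pow_lt_one₀ (abs_nonneg _) abs_goldenConj_lt_one (by omega)
  have h1 := orbit_lt_one j
  rcases lt_or_ge (orbit j + a) 1 with hja | hja
  · refine ⟨t₁, ht₁, ht₁', ?_⟩
    rw [orbit_add, h₁, Int.fract_eq_self.mpr ⟨by linarith [orbit_nonneg j], hja⟩]
    linarith
  · refine ⟨t₂, ht₂, ht₂', ?_⟩
    rw [orbit_add, h₂, fract_eq_sub_one (by linarith) (by linarith)]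
    linarith

lemma exists_mem_window_of_recurrent {P : ℕ → Prop} {L : ℕ} (h₀ : ∃ j ≤ L, P j)
    (hret : ∀ j, P j → ∃ t, 1 ≤ t ∧ t ≤ L ∧ P (j + t)) (i : ℕ) :
    ∃ j, i ≤ j ∧ j ≤ i + L ∧ P j := by
  induction i with
  | zero => simpa using h₀
  | succ i ih =>
    obtain ⟨j, hij, hjL, hj⟩ := ih
    rcases Nat.lt_or_ge i j with hlt | hle
    · exact ⟨j, hlt, by omega, hj⟩
    · obtain ⟨t, ht, htL, hP⟩ := hret j hj
      exact ⟨j + t, by omega, by omega, hP⟩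

lemma exists_orbit_lt_in_window {m : ℕ} (hm : 1 ≤ m) (i : ℕ) :
    ∃ j, i ≤ j ∧ j ≤ i + Nat.fib (m + 2) ∧ orbit j < |ψ| ^ m :=
  exists_mem_window_of_recurrent ⟨0, Nat.zero_le _, by simpa using pow_pos abs_goldenConj_pos m⟩
    (fun _ => exists_orbit_lt_return hm) i

lemma exists_one_sub_le_orbit_in_window {m : ℕ} (hm : 1 ≤ m) (i : ℕ) :
    ∃ j, i ≤ j ∧ j ≤ i + Nat.fib (m + 2) ∧ 1 - |ψ| ^ m ≤ orbit j := by
  refine exists_mem_window_of_recurrent ?_ (fun _ => exists_one_sub_le_orbit_return hm) i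
  obtain ⟨-, t₂, -, -, -, ht₂, a, b, ha, -, hab, -, h₂⟩ := exists_fib_steps hm
  exact ⟨t₂, ht₂, by linarith⟩

lemma not_orbit_lt_slope_and_succ (j : ℕ) : ¬(orbit j < slope ∧ orbit (j + 1) < slope) := by
  rintro ⟨h1, h2⟩
  rw [orbit_succ, Int.fract_eq_self.mpr ⟨by linarith [orbit_nonneg j, slope_pos],
    by linarith [slope_lt_half]⟩] at h2
  linarith [orbit_nonneg j]

lemma not_slope_le_orbit_three (j : ℕ) :
    ¬(slope ≤ orbit j ∧ slope ≤ orbit (j + 1) ∧ slope ≤ orbit (j + 2)) := by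
  rintro ⟨h1, h2, h3⟩
  have := slope_lt_half
  have := one_lt_three_mul_slope
  have := orbit_lt_one j
  rcases le_or_gt 1 (orbit j + slope) with hc | hc
  · rw [orbit_succ, fract_eq_sub_one hc (by linarith)] at h2
    linarith
  · have e1 : orbit (j + 1) = orbit j + slope := by
      rw [orbit_succ, Int.fract_eq_self.mpr ⟨by linarith, hc⟩]
    rw [orbit_succ, e1, fract_eq_sub_one (by linarith) (by linarith)] at h3
    linarith

/-! ### Stretches of the orbit with a periodic coding -/

/-- Via `sturm`, this says that `φ^ω(0)` has period `q` on its letters `k₀, …, k₀ + c + q - 1`. -/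
def CodingPeriodic (q k₀ c : ℕ) : Prop :=
  ∀ j, k₀ < j → j ≤ k₀ + c → (orbit j < slope ↔ orbit (j + q) < slope)

lemma le_one_add_goldenRatio_mul_of_lt_fib {m q c : ℕ} (hm : 3 ≤ m) (hc : c < Nat.fib (m + 2))
    (hq : Nat.fib m ≤ q) :
    (c : ℝ) ≤ (1 + φ) * q - 1 / 2 := by
  have hfib : (1 + φ) * Nat.fib m = Nat.fib (m + 2) - ψ ^ m := by
    have := fib_mul_goldenRatio m
    rw [Nat.fib_add_two]; push_cast; linear_combination this
  have hψ : ψ ^ m ≤ |ψ| ^ 3 :=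
    (le_abs_self _).trans ((abs_pow ψ m).symm ▸ abs_goldenConj_pow_anti hm)
  have hc' : (c : ℝ) + 1 ≤ Nat.fib (m + 2) := by exact_mod_cast hc
  have hq' : (Nat.fib m : ℝ) ≤ q := by exact_mod_cast hq
  have := mul_le_mul_of_nonneg_left hq' (by linarith [goldenRatio_pos] : (0 : ℝ) ≤ 1 + φ)
  linarith [abs_goldenConj_pow_three, goldenRatio_lt]

lemma exists_pow_bracket {d : ℝ} (h0 : 0 < d) (h : d < slope) :
    ∃ M, 2 ≤ M ∧ |ψ| ^ (M + 1) ≤ d ∧ d < |ψ| ^ M := by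
  have hex : ∃ m, |ψ| ^ m ≤ d :=
    (exists_pow_lt_of_lt_one h0 abs_goldenConj_lt_one).imp fun _ => le_of_lt
  have h2 : 3 ≤ Nat.find hex := by
    by_contra! hlt
    linarith [abs_goldenConj_pow_anti (show Nat.find hex ≤ 2 by omega), slope_eq,
      Nat.find_spec hex]
  refine ⟨Nat.find hex - 1, by omega, ?_, ?_⟩
  · rw [Nat.sub_add_cancel (by omega)]; exact Nat.find_spec hex
  · by_contra! hle
    have := Nat.find_min' hex hle
    omega

namespace CodingPeriodic

variable {q k₀ c : ℕ}

lemma le_two_of_one (H : CodingPeriodic 1 k₀ c) : c ≤ 2 := by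
  by_contra! hc
  have B1 := H (k₀ + 1) (by omega) (by omega)
  have B2 := H (k₀ + 2) (by omega) (by omega)
  rcases lt_or_ge (orbit (k₀ + 1)) slope with h | h
  · exact not_orbit_lt_slope_and_succ (k₀ + 1) ⟨h, B1.mp h⟩
  · have n1 : slope ≤ orbit (k₀ + 2) := not_lt.mp fun hh => (not_lt.mpr h) (B1.mpr hh)
    have n2 : slope ≤ orbit (k₀ + 3) := not_lt.mp fun hh => (not_lt.mpr n1) (B2.mpr hh)
    exact not_slope_le_orbit_three (k₀ + 1) ⟨h, n1, n2⟩

lemma orbit_lt_one_sub (H : CodingPeriodic q k₀ c) (hc : 1 ≤ c) (hq : orbit q < slope)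
    {j : ℕ} (hj₁ : k₀ ≤ j) (hj₂ : j ≤ k₀ + c) : orbit j < 1 - orbit q := by
  by_contra! hge
  have := slope_lt_half
  have := orbit_lt_one j
  have := orbit_nonneg q
  rcases hj₁.lt_or_eq with hlt | rfl
  · refine (not_lt.mpr (by linarith) : ¬ orbit j < slope) ((H j hlt hj₂).mpr ?_)
    rw [orbit_add, fract_eq_sub_one (by linarith) (by linarith)]
    linarith
  · have e1 : orbit (k₀ + 1) = orbit k₀ + slope - 1 := by
      rw [orbit_succ, fract_eq_sub_one (by linarith) (by linarith)]
    refine (not_lt.mpr ?_ : ¬ orbit (k₀ + 1 + q) < slope)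
      ((H (k₀ + 1) (by omega) (by omega)).mp (by rw [e1]; linarith))
    rw [orbit_add, e1, Int.fract_eq_self.mpr ⟨by linarith, by linarith⟩]
    linarith

lemma one_sub_le_orbit (H : CodingPeriodic q k₀ c) (hc : 1 ≤ c) (hq : 1 - slope < orbit q)
    {j : ℕ} (hj₁ : k₀ ≤ j) (hj₂ : j ≤ k₀ + c) : 1 - orbit q ≤ orbit j := by
  by_contra! hlt
  have := slope_lt_half
  have := orbit_nonneg j
  have := orbit_lt_one q
  rcases hj₁.lt_or_eq with hlt' | rfl
  · refine (not_lt.mpr ?_ : ¬ orbit (j + q) < slope) ((H j hlt' hj₂).mp (by linarith))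
    rw [orbit_add, Int.fract_eq_self.mpr ⟨by linarith, by linarith⟩]
    linarith
  · have e1 : orbit (k₀ + 1) = orbit k₀ + slope := by
      rw [orbit_succ, Int.fract_eq_self.mpr ⟨by linarith, by linarith⟩]
    refine (not_lt.mpr (by rw [e1]; linarith) : ¬ orbit (k₀ + 1) < slope)
      ((H (k₀ + 1) (by omega) (by omega)).mpr ?_)
    rw [orbit_add, e1, fract_eq_sub_one (by linarith) (by linarith [orbit_lt_one k₀])]
    linarith

lemma slope_le_orbit (H : CodingPeriodic q k₀ c) (h₁ : slope ≤ orbit q)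
    (h₂ : orbit q ≤ 1 - slope) {j : ℕ} (hj₁ : k₀ < j) (hj₂ : j ≤ k₀ + c) : slope ≤ orbit j := by
  by_contra! hlt
  refine (not_lt.mpr ?_ : ¬ orbit (j + q) < slope) ((H j hj₁ hj₂).mp hlt)
  rw [orbit_add, Int.fract_eq_self.mpr ⟨by linarith [orbit_nonneg j], by linarith⟩]
  linarith [orbit_nonneg j]

lemma length_le_of_orbit_lt (H : CodingPeriodic q k₀ c) (hq : 1 ≤ q) (hc : 1 ≤ c)
    (h : orbit q < slope) : (c : ℝ) ≤ (1 + φ) * q - 1 / 2 := by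
  obtain ⟨M, hM, hle, hlt⟩ := exists_pow_bracket (orbit_pos hq) h
  have hdist : distToInt (q * φ) = orbit q := by
    rw [distToInt_mul_goldenRatio, min_eq_left (by linarith [slope_lt_half])]
  obtain ⟨j, hj₁, hj₂, hj⟩ := exists_one_sub_le_orbit_in_window (m := M + 1) (by omega) k₀
  have hjc : k₀ + c < j := by
    by_contra! hjc
    linarith [H.orbit_lt_one_sub hc h hj₁ hjc]
  exact le_one_add_goldenRatio_mul_of_lt_fib (m := M + 1) (by omega) (by omega)
    (fib_le_of_distToInt_lt hq (hdist ▸ hlt))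

lemma length_le_of_lt_orbit (H : CodingPeriodic q k₀ c) (hq : 1 ≤ q) (hc : 1 ≤ c)
    (h : 1 - slope < orbit q) : (c : ℝ) ≤ (1 + φ) * q - 1 / 2 := by
  obtain ⟨M, hM, hle, hlt⟩ := exists_pow_bracket (sub_pos.mpr (orbit_lt_one q))
    (by linarith : 1 - orbit q < slope)
  have hdist : distToInt (q * φ) = 1 - orbit q := by
    rw [distToInt_mul_goldenRatio, min_eq_right (by linarith [slope_lt_half])]
  obtain ⟨j, hj₁, hj₂, hj⟩ := exists_orbit_lt_in_window (m := M + 1) (by omega) k₀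
  have hjc : k₀ + c < j := by
    by_contra! hjc
    linarith [H.one_sub_le_orbit hc h hj₁ hjc]
  exact le_one_add_goldenRatio_mul_of_lt_fib (m := M + 1) (by omega) (by omega)
    (fib_le_of_distToInt_lt hq (hdist ▸ hlt))

/-- A point within `‖q β‖` below `0` or `β` changes its coding under the shift by `q`. Such points
recur within `F (M + 3)` steps if `‖q β‖ ≥ |ψ| ^ (M + 1)`, while `‖q φ‖ < |ψ| ^ M` forces
`q ≥ F (M + 1)`. -/
theorem length_le (H : CodingPeriodic q k₀ c) (hq : 1 ≤ q) : (c : ℝ) ≤ (1 + φ) * q - 1 / 2 := by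
  have hq' : (1 : ℝ) ≤ q := by exact_mod_cast hq
  have := goldenRatio_gt
  rcases Nat.eq_zero_or_pos c with rfl | hc
  · push_cast; nlinarith
  rcases hq.eq_or_lt with rfl | hq2
  · have : (c : ℝ) ≤ 2 := by exact_mod_cast H.le_two_of_one
    push_cast; linarith
  rcases lt_or_ge (orbit q) slope with h₁ | h₁
  · exact H.length_le_of_orbit_lt hq hc h₁
  rcases lt_or_ge (1 - slope) (orbit q) with h₂ | h₂
  · exact H.length_le_of_lt_orbit hq hc h₂
  obtain ⟨j, hj₁, hj₂, hj⟩ := exists_orbit_lt_in_window (m := 2) (by norm_num) (k₀ + 1)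
  have hjc : k₀ + c < j := by
    by_contra! hjc
    linarith [H.slope_le_orbit h₁ h₂ (by omega) hjc, slope_eq]
  have : (c : ℝ) ≤ 3 := by exact_mod_cast (show c ≤ 3 by simp [Nat.fib] at hj₂; omega)
  have : (2 : ℝ) ≤ q := by exact_mod_cast hq2
  nlinarith

end CodingPeriodic

lemma orbit_lt_one_sub_of_lt_distToInt {j : ℕ} {x : ℝ} (h : x < distToInt (j * φ)) :
    orbit j < 1 - x := by
  rw [distToInt_mul_goldenRatio] at h
  exact lt_sub_comm.mp (lt_min_iff.mp h).2

/-- Among `F (n+1) < j < F (n+3)` only `F (n-1) + F (n+1)`, `F (n+2)` and `F n + F (n+2)` have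
`‖j φ‖ ≤ |ψ| ^ n`, and their orbit points are computed directly. -/
lemma orbit_lt_one_sub_pow {n j : ℕ} (hn : 4 ≤ n) (he : Even n) (h1 : Nat.fib (n + 1) < j)
    (h2 : j < Nat.fib (n + 3)) : orbit j < 1 - |ψ| ^ n := by
  obtain ⟨k, rfl⟩ : ∃ k, n = k + 3 := ⟨n - 3, by omega⟩
  replace h1 : Nat.fib (k + 4) < j := h1
  replace h2 : j < Nat.fib (k + 6) := h2
  have hk : Odd k := by rcases he with ⟨i, hi⟩; exact ⟨i - 2, by omega⟩
  have hfib : ∀ i, Nat.fib (i + 2) = Nat.fib i + Nat.fib (i + 1) := fun i => Nat.fib_add_two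
  have e₁ : |ψ| ^ (k + 1) = |ψ| ^ (k + 2) + |ψ| ^ (k + 3) := abs_goldenConj_pow_eq_add _
  have e₂ : |ψ| ^ (k + 2) = |ψ| ^ (k + 3) + |ψ| ^ (k + 4) := abs_goldenConj_pow_eq_add _
  have e₃ : |ψ| ^ (k + 3) = |ψ| ^ (k + 4) + |ψ| ^ (k + 5) := abs_goldenConj_pow_eq_add _
  have hpos : ∀ i, 0 < |ψ| ^ i := fun i => pow_pos abs_goldenConj_pos i
  have hsmall : |ψ| ^ (k + 3) < 1 / 4 := by
    have := abs_goldenConj_pow_anti (show 3 ≤ k + 3 by omega)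
    rw [abs_goldenConj_pow_three] at this; linarith [goldenRatio_lt]
  rcases lt_trichotomy j (Nat.fib (k + 5)) with hlt | rfl | hgt
  · obtain ⟨r, rfl⟩ : ∃ r, j = r + Nat.fib (k + 4) := ⟨j - Nat.fib (k + 4), by omega⟩
    by_cases hr : r = Nat.fib (k + 2)
    · rw [hr, orbit_add, orbit_fib_of_odd (hk.add_even (by decide)),
        orbit_fib_of_odd (hk.add_even (by decide)),
        fract_eq_sub_one (by linarith [hpos (k + 5)]) (by linarith [hpos (k + 2), hpos (k + 4)])]
      linarith [hpos (k + 4)]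
    · have hr' : |ψ| ^ (k + 1) ≤ distToInt (r * φ) :=
        abs_goldenConj_pow_le_distToInt_of_ne (by omega)
          (by linarith [hfib (k + 2), hfib (k + 3)]) hr
      have := distToInt_sub_le_add_fib r (a := k + 4) (by omega)
      exact orbit_lt_one_sub_of_lt_distToInt (by linarith [hpos (k + 3)])
  · rw [orbit_fib_of_even (by omega) (hk.add_odd (by decide))]
    linarith [hpos (k + 4)]
  · obtain ⟨r, rfl⟩ : ∃ r, j = r + Nat.fib (k + 5) := ⟨j - Nat.fib (k + 5), by omega⟩
    by_cases hr : r = Nat.fib (k + 3)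
    · rw [hr, orbit_add, orbit_fib_of_even (by omega) (hk.add_odd (by decide)),
        orbit_fib_of_even (by omega) (hk.add_odd (by decide)),
        Int.fract_eq_self.mpr ⟨by positivity, by linarith [hpos (k + 4)]⟩]
      linarith [hpos (k + 4)]
    · have hr' : |ψ| ^ (k + 2) ≤ distToInt (r * φ) :=
        abs_goldenConj_pow_le_distToInt_of_ne (by omega)
          (by linarith [hfib (k + 3), hfib (k + 4)]) hr
      have := distToInt_sub_le_add_fib r (a := k + 5) (by omega)
      exact orbit_lt_one_sub_of_lt_distToInt (by linarith [abs_goldenConj_pow_strictAnti (show k + 4 < k + 5 by omega)])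

/-- Shifting by `F n` moves the orbit by `|ψ| ^ n`, which changes the coding only for points in
`[β - |ψ| ^ n, β) ∪ [1 - |ψ| ^ n, 1)`; the first arc is the image of the second under the
rotation. -/
theorem codingPeriodic_fib {n : ℕ} (hn : 4 ≤ n) (he : Even n) :
    CodingPeriodic (Nat.fib n) (Nat.fib (n + 1) + 1) (Nat.fib (n + 2) - 2) := by
  intro j hj₁ hj₂
  have hfib : Nat.fib (n + 3) = Nat.fib (n + 1) + Nat.fib (n + 2) := Nat.fib_add_two
  have hfib6 : 8 ≤ Nat.fib (n + 2) := Nat.fib_mono (show 6 ≤ n + 2 by omega)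
  obtain ⟨i, rfl⟩ : ∃ i, j = i + 1 := ⟨j - 1, by omega⟩
  have hi := orbit_lt_one_sub_pow hn he (j := i) (by omega) (by omega)
  have hj := orbit_lt_one_sub_pow hn he (j := i + 1) (by omega) (by omega)
  have hη : |ψ| ^ n < slope := by
    rw [slope_eq]; exact abs_goldenConj_pow_strictAnti (by omega)
  have := orbit_nonneg i
  have := orbit_nonneg (i + 1)
  have := pow_pos abs_goldenConj_pos n
  have := slope_lt_half
  have hgap : ¬(slope - |ψ| ^ n ≤ orbit (i + 1) ∧ orbit (i + 1) < slope) := by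
    rintro ⟨ha, hb⟩
    rcases lt_or_ge (orbit i + slope) 1 with hc | hc
    · rw [orbit_succ, Int.fract_eq_self.mpr ⟨by linarith, hc⟩] at hb
      linarith
    · rw [orbit_succ, fract_eq_sub_one hc (by linarith [orbit_lt_one i])] at ha
      linarith
  rw [orbit_add (i + 1), orbit_fib_of_even (by omega) he,
    Int.fract_eq_self.mpr ⟨by linarith, by linarith⟩]
  constructor
  · intro h
    by_contra! h'
    exact hgap ⟨by linarith, h⟩
  · intro h
    by_contra! h'
    linarith

/-! ### `φ^ω(0)` is a mechanical word -/

/-- The fixed point `x = φ^ω(0)`, as proved in `phiIter_getD`. -/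
def sturm (k : ℕ) : Bool := decide (orbit (k + 1) < slope)

/-- The word `w = g(x)`, see `wFactor_iff_factorInf`. -/
def gWord (i : ℕ) : Bool := if i % 2 = 0 then sturm (i / 2) else true

lemma floor_succ_mul_slope (k : ℕ) :
    ⌊((k + 1 : ℕ) : ℝ) * slope⌋ = ⌊(k : ℝ) * slope⌋ + if sturm k then 1 else 0 := by
  have hsplit : ((k + 1 : ℕ) : ℝ) * slope = ⌊(k : ℝ) * slope⌋ + (orbit k + slope) := by
    rw [orbit, Int.fract]; push_cast; ring
  have := orbit_nonneg k
  have := orbit_lt_one k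
  have := slope_lt_half
  have := slope_pos
  rw [hsplit, Int.floor_intCast_add, add_right_inj, sturm, orbit_succ]
  rcases lt_or_ge (orbit k + slope) 1 with hc | hc
  · rw [Int.fract_eq_self.mpr ⟨by linarith, hc⟩, Int.floor_eq_zero_iff.mpr ⟨by linarith, hc⟩]
    simp; linarith
  · rw [fract_eq_sub_one hc (by linarith), (Int.floor_eq_iff (z := 1)).mpr ⟨by push_cast; linarith,
      by push_cast; linarith⟩]
    simp; linarith

lemma length_applyM_phiM_take {l : List Bool} (hl : ∀ k < l.length, l.getD k false = sturm k)
    {m : ℕ} (hm : m ≤ l.length) :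
    ((applyM phiM (l.take m)).length : ℤ) = 3 * m - ⌊(m : ℝ) * slope⌋ := by
  induction m with
  | zero => simp [applyM]
  | succ k ih =>
    have hk : k < l.length := by omega
    rw [List.take_add_one, List.getElem?_eq_getElem hk, Option.toList_some, applyM, List.map_append,
      List.flatten_append, List.length_append, ← applyM, Nat.cast_add, ih (by omega),
      floor_succ_mul_slope, ← hl k hk, List.getD_eq_getElem _ _ hk]
    cases l[k] <;> simp [phiM] <;> ring

lemma three_mul_sub_floor_strictMono :
    StrictMono fun m : ℕ => 3 * (m : ℤ) - ⌊(m : ℝ) * slope⌋ := by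
  refine strictMono_nat_of_lt_succ fun k => ?_
  rw [floor_succ_mul_slope]
  split_ifs <;> push_cast <;> linarith

/-- The positions `T ≥ 1` with `{T β} < β` are exactly the values `3 m - ⌊m β⌋ = ⌈m (1 + φ)⌉`,
`m ≥ 1`, since `β (1 + φ) = 1`. -/
lemma exists_three_mul_sub_floor_iff {T : ℕ} (hT : 1 ≤ T) :
    (∃ m : ℕ, 1 ≤ m ∧ (T : ℤ) = 3 * m - ⌊(m : ℝ) * slope⌋) ↔ orbit T < slope := by
  have hβ := slope_mul_one_add_goldenRatio
  have hβ' : 3 - slope = 1 + φ := by rw [slope]; ring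
  have hpos : 0 < 1 + φ := by linarith [goldenRatio_pos]
  constructor
  · rintro ⟨m, -, hTm⟩
    have hT' : (T : ℝ) = m * (1 + φ) + orbit m := by
      have : (T : ℝ) = 3 * m - ⌊(m : ℝ) * slope⌋ := by exact_mod_cast hTm
      rw [orbit, Int.fract, ← hβ', this]; ring
    have hlo : ((T : ℝ) - 1) * slope < m := by
      nlinarith [orbit_lt_one m, slope_pos]
    have hhi : (m : ℝ) ≤ T * slope := by nlinarith [orbit_nonneg m, slope_pos]
    have hfl : (m : ℝ) ≤ ⌊(T : ℝ) * slope⌋ := by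
      exact_mod_cast Int.le_floor.mpr (by exact_mod_cast hhi)
    rw [orbit, Int.fract]
    linarith
  · intro h
    have hTβ : (T : ℝ) * slope = ⌊(T : ℝ) * slope⌋ + orbit T := (Int.floor_add_fract _).symm
    have hT' : (1 : ℝ) ≤ T := by exact_mod_cast hT
    have hm0 : (0 : ℝ) < ⌊(T : ℝ) * slope⌋ := by nlinarith [slope_pos]
    have hm0' : 0 < ⌊(T : ℝ) * slope⌋ := by exact_mod_cast hm0
    have hcast : ((⌊(T : ℝ) * slope⌋.toNat : ℕ) : ℝ) = ⌊(T : ℝ) * slope⌋ := by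
      exact_mod_cast Int.toNat_of_nonneg hm0'.le
    refine ⟨⌊(T : ℝ) * slope⌋.toNat, by omega, ?_⟩
    have hmβ : (⌊(T : ℝ) * slope⌋.toNat : ℝ) * slope =
        3 * ⌊(T : ℝ) * slope⌋ - T + orbit T * (1 + φ) := by
      rw [hcast]; unfold slope at hTβ ⊢
      linear_combination (1 + φ) * hTβ + (T : ℝ) * goldenRatio_sq
    have hlt : orbit T * (1 + φ) < 1 := by nlinarith
    have hfl : ⌊(⌊(T : ℝ) * slope⌋.toNat : ℝ) * slope⌋ = 3 * ⌊(T : ℝ) * slope⌋ - T := by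
      rw [Int.floor_eq_iff, hmβ]; push_cast
      constructor <;> nlinarith [orbit_nonneg T]
    rw [hfl, Int.toNat_of_nonneg hm0'.le]
    ring

lemma two_mul_length_le_length_applyM_phiM (l : List Bool) :
    2 * l.length ≤ (applyM phiM l).length := by
  induction l with
  | nil => simp [applyM]
  | cons a l ih =>
    rw [applyM_cons, List.length_append, List.length_cons]
    cases a <;> simp [phiM] <;> omega

lemma phiM_getD_eq_true_iff {a : Bool} {t : ℕ} (ht : t < (phiM a).length) :
    (phiM a).getD t false = true ↔ t + 1 = (phiM a).length := by
  cases a <;> simp [phiM] at ht ⊢ <;> interval_cases t <;> simp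

/-- Every `φ`-block ends with its only `1`. -/
lemma applyM_phiM_getD_eq_true_iff (l : List Bool) {t : ℕ} (ht : t < (applyM phiM l).length) :
    (applyM phiM l).getD t false = true ↔
      ∃ m < l.length, t + 1 = (applyM phiM (l.take (m + 1))).length := by
  induction l generalizing t with
  | nil => simp [applyM] at ht
  | cons a l ih =>
    have hlen (m : ℕ) : (applyM phiM ((a :: l).take (m + 1))).length =
        (phiM a).length + (applyM phiM (l.take m)).length := by
      simp [applyM_cons]
    rw [applyM_cons] at ht ⊢
    simp only [hlen, List.length_cons]
    rcases lt_or_ge t (phiM a).length with hlt | hge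
    · rw [List.getD_append _ _ _ _ hlt, phiM_getD_eq_true_iff hlt]
      refine ⟨fun h => ⟨0, by omega, by simpa [applyM] using h⟩, fun ⟨m, hm, h⟩ => ?_⟩
      rcases m with _ | m
      · simpa [applyM] using h
      · have := two_mul_length_le_length_applyM_phiM (l.take (m + 1))
        rw [List.length_take, min_eq_left (by omega)] at this
        omega
    · rw [List.getD_append_right _ _ _ _ hge, List.length_append] at *
      rw [ih (by omega)]
      constructor
      · rintro ⟨m, hm, h⟩
        exact ⟨m + 1, by omega, by omega⟩
      · rintro ⟨_ | m, hm, h⟩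
        · simp [applyM] at h; omega
        · exact ⟨m, by omega, by omega⟩

/-- The `1`s of `φ(l)` sit at the ends `3 m - ⌊m β⌋` of the blocks (`length_applyM_phiM_take`),
and these are exactly the positions `T` with `{T β} < β` (`exists_three_mul_sub_floor_iff`). -/
theorem phiIter_getD (N : ℕ) {k : ℕ} (hk : k < (phiIter N).length) :
    (phiIter N).getD k false = sturm k := by
  induction N generalizing k with
  | zero =>
    obtain rfl : k = 0 := by simpa [phiIter] using hk
    simp [phiIter, sturm, orbit_one]
  | succ N ih =>
    set l := phiIter N
    have hlen {m : ℕ} (hm : m ≤ l.length) := length_applyM_phiM_take (fun _ hk => ih hk) hm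
    have hT : ((k + 1 : ℕ) : ℤ) ≤ 3 * l.length - ⌊(l.length : ℝ) * slope⌋ := by
      rw [← hlen le_rfl, List.take_length]; exact_mod_cast hk
    rw [sturm, Bool.eq_iff_iff, decide_eq_true_iff, phiIter, applyM_phiM_getD_eq_true_iff l hk,
      ← exists_three_mul_sub_floor_iff (by omega)]
    constructor
    · rintro ⟨m, hm, h⟩
      exact ⟨m + 1, by omega, by rw [← hlen (by omega)]; exact_mod_cast h⟩
    · rintro ⟨m, hm, h⟩
      have hml : m ≤ l.length := by
        by_contra! hlt
        have := three_mul_sub_floor_strictMono hlt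
        simp only at this
        omega
      refine ⟨m - 1, by omega, ?_⟩
      rw [Nat.sub_add_cancel hm]
      exact_mod_cast h.trans (hlen hml).symm

lemma length_applyM_gM (l : List Bool) : (applyM gM l).length = 2 * l.length := by
  induction l with
  | nil => rfl
  | cons a l ih => cases a <;> simp [applyM_cons, gM, ih] <;> ring

lemma applyM_gM_getD (l : List Bool) {i : ℕ} (hi : i < 2 * l.length) :
    (applyM gM l).getD i false = if i % 2 = 0 then l.getD (i / 2) false else true := by
  induction l generalizing i with
  | nil => simp at hi
  | cons a l ih =>
    rw [applyM_cons]
    rcases lt_or_ge i 2 with hlt | hge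
    · rw [List.getD_append _ _ _ _ (by cases a <;> simp [gM] <;> omega)]
      interval_cases i <;> cases a <;> rfl
    · obtain ⟨i, rfl⟩ : ∃ j, i = j + 2 := ⟨i - 2, by omega⟩
      have h2 : (gM a).length = 2 := by cases a <;> rfl
      rw [List.getD_append_right _ _ _ _ (by omega), h2, Nat.add_sub_cancel,
        ih (by simp at hi; omega)]
      simp [Nat.add_mod_right, show (i + 2) / 2 = i / 2 + 1 by omega]

lemma le_length_phiIter (N : ℕ) : N + 1 ≤ (phiIter N).length := by
  induction N with
  | zero => simp [phiIter]
  | succ N ih =>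
    have := two_mul_length_le_length_applyM_phiM (phiIter N)
    simp only [phiIter]; omega

lemma applyM_gM_phiIter_getD (N : ℕ) {i : ℕ} (hi : i < (applyM gM (phiIter N)).length) :
    (applyM gM (phiIter N)).getD i false = gWord i := by
  rw [length_applyM_gM] at hi
  rw [applyM_gM_getD _ hi, gWord, phiIter_getD N (by omega)]

lemma getElem_applyM_gM_phiIter (N : ℕ) {i : ℕ} (hi : i < (applyM gM (phiIter N)).length) :
    (applyM gM (phiIter N))[i] = gWord i := by
  rw [← applyM_gM_phiIter_getD N hi, List.getD_eq_getElem]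

/-- The words `g(φ^N(0))` are prefixes of `w`, and they exhaust it. -/
theorem wFactor_iff_factorInf (u : List Bool) : WFactor u ↔ FactorInf u gWord := by
  constructor
  · rintro ⟨N, s, t, h⟩
    refine ⟨s.length, List.ext_getElem (by simp) fun k hk _ => ?_⟩
    have hk' : s.length + k < (applyM gM (phiIter N)).length := by
      rw [← h]; simp; omega
    rw [List.getElem_map, List.getElem_range, ← getElem_applyM_gM_phiIter N hk']
    simp only [← h, List.append_assoc]
    rw [List.getElem_append_right (by omega), List.getElem_append_left (by simp; omega)]
    simp
  · rintro ⟨i, hu⟩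
    generalize u.length = L at hu
    subst hu
    set W := applyM gM (phiIter (i + L))
    have hW : i + L ≤ W.length := by
      have := le_length_phiIter (i + L)
      rw [length_applyM_gM]; omega
    refine ⟨i + L, ?_⟩
    have : (List.range L).map (fun t => gWord (i + t)) = (W.drop i).take L :=
      List.ext_getElem (by simp; omega) fun k hk _ => by
        rw [List.getElem_map, List.getElem_range, List.getElem_take, List.getElem_drop,
          getElem_applyM_gM_phiIter]
    rw [this]
    exact (List.take_prefix _ _).isInfix.trans (List.drop_suffix _ _).isInfix

lemma gWord_two_mul (k : ℕ) : gWord (2 * k) = sturm k := by simp [gWord]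

lemma gWord_of_odd {i : ℕ} (hi : i % 2 = 1) : gWord i = true := by simp [gWord, hi]

lemma sturm_eq_true_iff (k : ℕ) : sturm k = true ↔ orbit (k + 1) < slope := by simp [sturm]

/-- Odd positions of `w` carry `1`, so an antisquare `y ȳ` of order `m ≥ 2` would force: for
even `m` a `1` opposite a `1`, for odd `m` three consecutive `0`s in `x`. -/
theorem eq_one_of_gWord_antisquare {i m : ℕ} (hm : 1 ≤ m)
    (h : ∀ t < m, gWord (i + m + t) = !gWord (i + t)) : m = 1 := by
  by_contra hm1
  rcases Nat.even_or_odd m with ⟨r, hr⟩ | hodd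
  · have := h (1 - i % 2) (by omega)
    rw [gWord_of_odd (by omega), gWord_of_odd (by omega)] at this
    exact absurd this (by decide)
  · obtain ⟨r, hr⟩ := hodd
    have hzero : ∀ k, i ≤ 2 * k → 2 * k < i + 2 * m → sturm k = false := by
      intro k hk₁ hk₂
      rw [← gWord_two_mul]
      rcases lt_or_ge (2 * k) (i + m) with hlt | hge
      · have := h (2 * k - i) (by omega)
        rw [show i + m + (2 * k - i) = 2 * k + m by omega, gWord_of_odd (by omega),
          show i + (2 * k - i) = 2 * k by omega] at this
        simpa using this.symm
      · have := h (2 * k - i - m) (by omega)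
        rwa [show i + m + (2 * k - i - m) = 2 * k by omega,
          gWord_of_odd (i := i + (2 * k - i - m)) (by omega)] at this
    refine not_slope_le_orbit_three ((i + 1) / 2 + 1) ⟨?_, ?_, ?_⟩ <;>
      refine not_lt.mp fun hlt => ?_
    · simpa [hzero ((i + 1) / 2) (by omega) (by omega)] using (sturm_eq_true_iff _).mpr hlt
    · simpa [hzero ((i + 1) / 2 + 1) (by omega) (by omega)] using (sturm_eq_true_iff _).mpr hlt
    · simpa [hzero ((i + 1) / 2 + 2) (by omega) (by omega)] using (sturm_eq_true_iff _).mpr hlt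

lemma length_le_of_gWord_periodic_odd {i p L : ℕ} (hp : p % 2 = 1)
    (h : ∀ t, t + p < L → gWord (i + t) = gWord (i + t + p)) : L ≤ p + 2 := by
  by_contra! hL
  have h0 := h 0 (by omega)
  have h2 := h 2 (by omega)
  obtain ⟨k, hk⟩ : ∃ k, 2 * k = i ∨ 2 * k = i + p := by
    rcases Nat.even_or_odd' i with ⟨k, hk | hk⟩
    · exact ⟨k, .inl hk.symm⟩
    · exact ⟨k + (p + 1) / 2, .inr (by omega)⟩
  have hk₁ : sturm k = true := by
    rcases hk with rfl | hk
    · rw [← gWord_two_mul, ← add_zero (2 * k), h0, gWord_of_odd (by omega)]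
    · rw [← gWord_two_mul, hk, ← add_zero i, ← h0, gWord_of_odd (by omega)]
  have hk₂ : sturm (k + 1) = true := by
    rcases hk with rfl | hk
    · rw [← gWord_two_mul, mul_add, mul_one, h2, gWord_of_odd (by omega)]
    · rw [← gWord_two_mul, show 2 * (k + 1) = i + 2 + p by omega, ← h2, gWord_of_odd (by omega)]
  rw [sturm_eq_true_iff] at hk₁ hk₂
  exact not_orbit_lt_slope_and_succ (k + 1) ⟨hk₁, hk₂⟩

lemma codingPeriodic_of_gWord_periodic {i q L : ℕ} (hL : 2 * q < L)
    (h : ∀ t, t + 2 * q < L → gWord (i + t) = gWord (i + t + 2 * q)) :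
    CodingPeriodic q ((i + 1) / 2) ((i + L - 2 * q + 1) / 2 - (i + 1) / 2) := by
  intro j hj₁ hj₂
  have := h (2 * (j - 1) - i) (by omega)
  rw [show i + (2 * (j - 1) - i) = 2 * (j - 1) by omega,
    show 2 * (j - 1) + 2 * q = 2 * (j - 1 + q) by ring, gWord_two_mul, gWord_two_mul,
    Bool.eq_iff_iff, sturm_eq_true_iff, sturm_eq_true_iff] at this
  rwa [show j - 1 + 1 = j by omega, show j - 1 + q + 1 = j + q by omega] at this

theorem length_le_of_gWord_periodic {i p L : ℕ} (hp : 1 ≤ p)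
    (h : ∀ t, t + p < L → gWord (i + t) = gWord (i + t + p)) : (L : ℝ) ≤ (2 + φ) * p := by
  have := goldenRatio_pos
  have hp' : (1 : ℝ) ≤ p := by exact_mod_cast hp
  rcases le_or_gt L p with hLp | hLp
  · have : (L : ℝ) ≤ p := by exact_mod_cast hLp
    nlinarith
  rcases Nat.even_or_odd' p with ⟨q, rfl | rfl⟩
  · have hc := (codingPeriodic_of_gWord_periodic hLp h).length_le (by omega)
    have : (L : ℝ) ≤ 2 * q + 2 * ((i + L - 2 * q + 1) / 2 - (i + 1) / 2 : ℕ) + 1 := by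
      exact_mod_cast (by omega : L ≤ 2 * q + 2 * ((i + L - 2 * q + 1) / 2 - (i + 1) / 2) + 1)
    push_cast at hc ⊢
    linarith
  · have : (L : ℝ) ≤ (2 * q + 1 : ℕ) + 2 := by
      exact_mod_cast length_le_of_gWord_periodic_odd (by omega) h
    push_cast at this ⊢
    nlinarith [one_lt_goldenRatio, (q.cast_nonneg : (0 : ℝ) ≤ q)]

lemma gWord_periodic_fib {n t : ℕ} (hn : 4 ≤ n) (he : Even n)
    (ht : t + 2 * Nat.fib n < 2 * (Nat.fib (n + 2) - 2 + Nat.fib n)) :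
    gWord (2 * (Nat.fib (n + 1) + 1) + t) =
      gWord (2 * (Nat.fib (n + 1) + 1) + t + 2 * Nat.fib n) := by
  rcases Nat.even_or_odd' t with ⟨s, rfl | rfl⟩
  · have := codingPeriodic_fib hn he (Nat.fib (n + 1) + 1 + s + 1) (by omega) (by omega)
    rw [show 2 * (Nat.fib (n + 1) + 1) + 2 * s = 2 * (Nat.fib (n + 1) + 1 + s) by ring,
      show 2 * (Nat.fib (n + 1) + 1 + s) + 2 * Nat.fib n =
        2 * (Nat.fib (n + 1) + 1 + s + Nat.fib n) by ring,
      gWord_two_mul, gWord_two_mul, Bool.eq_iff_iff, sturm_eq_true_iff, sturm_eq_true_iff]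
    rwa [add_right_comm _ (Nat.fib n)]
  · rw [gWord_of_odd (by omega), gWord_of_odd (by omega)]

theorem FactorInf.antisquare_gWord_eq {u : List Bool} (hu : FactorInf u gWord)
    (ha : Antisquare u) : u = [false, true] ∨ u = [true, false] := by
  obtain ⟨y, hy, rfl⟩ := ha
  obtain ⟨i, hu⟩ := hu
  have hm : 1 ≤ y.length := List.length_pos_iff.mpr hy
  have hget : ∀ t < 2 * y.length, (y ++ comp y).getD t false = gWord (i + t) := fun t ht => by
    rw [hu, getD_map_range (by simpa [comp, two_mul] using ht)]
  have hcomp : ∀ t < y.length, (y ++ comp y).getD (y.length + t) false =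
      !(y ++ comp y).getD t false := fun t ht => by
    rw [List.getD_append_right _ _ _ _ (by omega), Nat.add_sub_cancel_left,
      List.getD_append _ _ _ _ ht, comp, List.getD_eq_getElem _ _ (by simpa using ht),
      List.getD_eq_getElem _ _ ht, List.getElem_map]
  have h1 := eq_one_of_gWord_antisquare (i := i) hm fun t ht => by
    rw [add_assoc, ← hget _ (by omega), ← hget _ (by omega), hcomp t ht]
  obtain ⟨a, rfl⟩ := List.length_eq_one_iff.mp h1
  cases a <;> simp [comp]

theorem FactorInf.length_le_of_hasPeriod_gWord {u : List Bool} {p : ℕ} (hu : FactorInf u gWord)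
    (hp : HasPeriod u p) : (u.length : ℝ) ≤ (2 + φ) * p := by
  obtain ⟨i, hu⟩ := hu
  rw [hu, hasPeriod_map_range_iff] at hp
  exact length_le_of_gWord_periodic hp.1 hp.2

theorem exists_factorInf_gWord_le_exponent {n : ℕ} (hn : 4 ≤ n) (he : Even n) :
    ∃ u, FactorInf u gWord ∧ u ≠ [] ∧ 2 + φ - 2 / Nat.fib n ≤ exponent u := by
  set L := 2 * (Nat.fib (n + 2) - 2 + Nat.fib n)
  have hfib6 : 8 ≤ Nat.fib (n + 2) := Nat.fib_mono (show 6 ≤ n + 2 by omega)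
  have hq : 0 < Nat.fib n := Nat.fib_pos.mpr (by omega)
  have hper : HasPeriod ((List.range L).map fun t => gWord (2 * (Nat.fib (n + 1) + 1) + t))
      (2 * Nat.fib n) :=
    hasPeriod_map_range_iff.mpr ⟨by omega, fun _ ht => gWord_periodic_fib hn he ht⟩
  refine ⟨_, ⟨2 * (Nat.fib (n + 1) + 1), by simp⟩, by simp [L]; omega,
    le_trans ?_ (div_le_exponent hper)⟩
  have hF : (Nat.fib (n + 2) : ℝ) = (1 + φ) * Nat.fib n + |ψ| ^ n := by
    rw [Nat.fib_add_two, Nat.cast_add]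
    linear_combination -fib_mul_goldenRatio_of_even he
  have hq' : (0 : ℝ) < Nat.fib n := by exact_mod_cast hq
  rw [List.length_map, List.length_range, le_div_iff₀ (by positivity)]
  simp only [L]
  push_cast [show 2 ≤ Nat.fib (n + 2) by omega]
  have h4 : 2 / (Nat.fib n : ℝ) * (2 * Nat.fib n) = 4 := by field_simp; ring
  rw [hF, sub_mul, h4]
  nlinarith [pow_pos abs_goldenConj_pos n]

lemma exists_even_two_div_fib_lt {ε : ℝ} (hε : 0 < ε) :
    ∃ n, 4 ≤ n ∧ Even n ∧ 2 / (Nat.fib n : ℝ) < ε := by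
  obtain ⟨N, hN⟩ := exists_nat_gt (2 / ε)
  refine ⟨2 * N + 6, by omega, ⟨N + 3, by ring⟩, ?_⟩
  have hfib : (N : ℝ) < Nat.fib (2 * N + 6) := by
    exact_mod_cast (show N < 2 * N + 6 by omega).trans_le (Nat.le_fib_self (by omega))
  rw [div_lt_iff₀ hε] at hN
  rw [div_lt_iff₀ (by linarith [(N.cast_nonneg : (0 : ℝ) ≤ N)])]
  nlinarith

end GoldenSturmian

end

open GoldenSturmian

/-- w = g(φ^ω(0)) has no antisquare factors other than 01 and 10, and
its critical exponent (the supremum of exponents of its nonempty factors) equals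
2 + (1+√5)/2. -/
theorem stmt_2 :
    (∀ u, WFactor u → Antisquare u → u = [false, true] ∨ u = [true, false]) ∧
    IsLUB {e : ℝ | ∃ u, WFactor u ∧ u ≠ [] ∧ e = exponent u}
      (2 + (1 + Real.sqrt 5) / 2) := by
  change _ ∧ IsLUB _ (2 + Real.goldenRatio)
  simp_rw [wFactor_iff_factorInf]
  refine ⟨fun u hu ha => hu.antisquare_gWord_eq ha, ?_, fun b hb => ?_⟩
  · rintro e ⟨u, hu, hne, rfl⟩
    exact exponent_le hne fun p hp => hu.length_le_of_hasPeriod_gWord hp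
  · refine le_of_forall_pos_lt_add fun ε hε => ?_
    obtain ⟨n, hn, he, hlt⟩ := exists_even_two_div_fib_lt hε
    obtain ⟨u, hu, hne, hexp⟩ := exists_factorInf_gWord_le_exponent hn he
    linarith [hb ⟨u, hu, hne, rfl⟩]
end

section
/- A binary word w is a minimal antisquare (that is, w is an antisquare, and every proper factor of w contains no antisquare factor other than possibly 01 and 10) if and only if w belongs to one of the following families, organized by its order n: for n = 1, w ∈ {01, 10}; for n = 2, w ∈ {0011, 0110, 1001, 1100}; for n = 3, w ∈ {010101, 101010}; there are no minimal antisquares of order 4; and for each n ≥ 5, w is one of the 2n conjugates (cyclic shifts) of 0^{n−2} 1 0 1^{n−2} 0 1. -/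
/-- A minimal antisquare: an antisquare all of whose proper factors are good. -/
def MinAnti (w : List Bool) : Prop :=
  Antisquare w ∧ ∀ u, u <:+: w → u ≠ w → Good u

/-- The word 0^{n-2} 1 0 1^{n-2} 0 1, an antisquare of order n. -/
def pat (n : ℕ) : List Bool :=
  List.replicate (n - 2) false ++ [true, false] ++ List.replicate (n - 2) true ++ [false, true]

/-!
Read an antisquare `w = y ++ comp y` of order `n` circularly, as `c : ℤ → Bool` with
`c (x + n) = !c x`. Its difference word `d x = c (x + 1) ^^ c x` is `n`-periodic with an odd
number of ones per period, and `c` has an antisquare of order `k` at `r` exactly when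
`d` repeats its window `[r, r + k - 1)` at distance `k` and has an odd number of ones on
`[r, r + k)`.

If `n ≥ 5` and `w` is minimal, no antisquare of order `k ≥ 2` with `2 * k ≤ n + 1` occurs anywhere
in `c`, since such a window is, up to complement, a proper factor of `w`. Orders 2 and 3 say that
every letter of `d` has an equal neighbour and that `d` avoids `11111`; with the parity this
forces a maximal run `111`. If `d` had a second run of ones, the shorter zero gap `0^g` next to
this run would make `0^g 111 0^g 11` (or its mirror `11 0^g 111 0^g`) a factor of `d`, i.e. an
antisquare of order `g + 3` in `c`, and `2 * (g + 3) ≤ n + 1`. So `d` is circularly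
`0^(n-3) 111`, which determines `w` up to conjugacy. Conversely, a direct check shows that the
circular word of `pat n` has no antisquare of order `2 ≤ k < n`. Orders up to 4 are settled by
computation.
-/

open List

def cyc (l : List Bool) (i : ℤ) : Bool := l.getD (i % (l.length : ℤ)).toNat false

lemma cyc_natCast {l : List Bool} {i : ℕ} (h : i < l.length) : cyc l i = l.getD i false := by
  rw [cyc, Int.emod_eq_of_lt (by omega) (by omega), Int.toNat_natCast]

lemma cyc_add_length (l : List Bool) (i : ℤ) : cyc l (i + l.length) = cyc l i := by
  simp [cyc]

lemma cyc_add_emod_length (l : List Bool) (i s : ℤ) :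
    cyc l (i + s % l.length) = cyc l (i + s) := by
  simp [cyc, Int.add_emod_emod]

lemma cyc_rotate (l : List Bool) (m : ℕ) (i : ℤ) : cyc (l.rotate m) i = cyc l (i + m) := by
  rcases Nat.eq_zero_or_pos l.length with hl | hl
  · simp [length_eq_zero_iff.mp hl, cyc]
  have hL : (0 : ℤ) < l.length := by exact_mod_cast hl
  have h₀ := Int.emod_nonneg i hL.ne'
  have h₁ := Int.emod_lt_of_pos i hL
  have key : ((i % l.length).toNat + m) % l.length = ((i + m) % l.length).toNat := by
    apply Int.ofNat_inj.mp
    push_cast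
    rw [Int.toNat_of_nonneg h₀, Int.toNat_of_nonneg (Int.emod_nonneg _ hL.ne'), Int.emod_add_emod]
  simp only [cyc, length_rotate]
  rw [getD_eq_getElem _ _ (by rw [length_rotate]; omega), getElem_rotate,
    ← getD_eq_getElem l false, key]

lemma eq_of_cyc_eq {l l' : List Bool} (hl : l.length = l'.length)
    (h : ∀ i : ℕ, i < l.length → cyc l i = cyc l' i) : l = l' := by
  refine List.ext_getElem hl fun i h₁ h₂ => ?_
  have := h i h₁
  rwa [cyc_natCast h₁, cyc_natCast h₂, getD_eq_getElem _ _ h₁, getD_eq_getElem _ _ h₂] at this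

lemma exists_append_eq_of_cyc_eq {l l' : List Bool} (hl : l.length = l'.length) (s : ℤ)
    (h : ∀ i, cyc l i = cyc l' (i + s)) : ∃ u v, l' = u ++ v ∧ l = v ++ u := by
  rcases Nat.eq_zero_or_pos l'.length with hl' | hl'
  · exact ⟨[], [], by simpa using hl', by simpa [hl'] using hl⟩
  have hL : (0 : ℤ) < l'.length := by exact_mod_cast hl'
  set m := (s % l'.length).toNat
  have hm : (m : ℤ) = s % l'.length := Int.toNat_of_nonneg (Int.emod_nonneg s hL.ne')
  refine ⟨l'.take m, l'.drop m, (take_append_drop m l').symm, ?_⟩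
  rw [← rotate_eq_drop_append_take (by have := Int.emod_lt_of_pos s hL; omega)]
  refine eq_of_cyc_eq (by simp [hl]) fun i _ => ?_
  rw [h, cyc_rotate, hm, cyc_add_emod_length]

lemma forall_of_add_invariant {P : ℤ → Prop} {n : ℤ} (hn : 0 < n) (hP : ∀ x, P (x + n) ↔ P x)
    (h : ∀ x, 0 ≤ x → x < n → P x) (x : ℤ) : P x := by
  have key : ∀ q : ℤ, P (x % n + n * q) := by
    intro q
    induction q using Int.induction_on with
    | zero => simpa using h _ (Int.emod_nonneg x hn.ne') (Int.emod_lt_of_pos x hn)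
    | succ q ih => rwa [mul_add, mul_one, ← add_assoc, hP]
    | pred q ih => rwa [← hP, show x % n + n * (-q - 1) + n = x % n + n * -q by ring]
  simpa [Int.emod_def] using key (x / n)

lemma getD_append_comp {y : List Bool} {j : ℕ} (hj : j < y.length) :
    (y ++ comp y).getD (y.length + j) false = !(y ++ comp y).getD j false := by
  rw [getD_append_right _ _ _ _ (by omega), getD_append _ _ _ _ hj, Nat.add_sub_cancel_left,
    comp, getD_eq_getElem _ _ (by simpa using hj), getElem_map, getD_eq_getElem]

lemma cyc_append_comp {y : List Bool} (hy : y ≠ []) (i : ℤ) :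
    cyc (y ++ comp y) (i + y.length) = !cyc (y ++ comp y) i := by
  set w := y ++ comp y
  have hw : w.length = 2 * y.length := by simp [w, comp]; omega
  have hpos : 0 < y.length := length_pos_iff.mpr hy
  refine forall_of_add_invariant (P := fun i => cyc w (i + y.length) = !cyc w i)
    (n := w.length) (by omega) (fun i => ?_) (fun i h₀ h₁ => ?_) i
  · simp only [add_right_comm i, cyc_add_length]
  lift i to ℕ using h₀
  rcases lt_or_ge i y.length with hi | hi
  · rw [show (i : ℤ) + y.length = (y.length + i : ℕ) by push_cast; ring, cyc_natCast (by omega),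
      cyc_natCast (by omega), getD_append_comp hi]
  · obtain ⟨j, rfl⟩ := Nat.exists_eq_add_of_le hi
    rw [show ((y.length + j : ℕ) : ℤ) + y.length = j + w.length by push_cast; omega,
      cyc_add_length, cyc_natCast (by omega), cyc_natCast (by omega), getD_append_comp (by omega),
      Bool.not_not]

lemma antisquare_of_getD {x : List Bool} {k : ℕ} (hk : 0 < k) (hx : x.length = 2 * k)
    (h : ∀ j < k, x.getD (k + j) false = !x.getD j false) : Antisquare x := by
  refine ⟨x.take k, by rw [ne_eq, ← length_eq_zero_iff, length_take]; omega,
    List.ext_getElem (by simp [comp]; omega) fun j h₁ h₂ => ?_⟩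
  have hlen : (x.take k).length = k := by simp; omega
  rw [getElem_append]
  split_ifs with hj
  · simp
  · have := h (j - k) (by omega)
    rw [Nat.add_sub_cancel' (by omega), getD_eq_getElem _ _ h₁,
      getD_eq_getElem _ _ (by omega)] at this
    simp [comp, this, hlen]

lemma minAnti_iff {w : List Bool} : MinAnti w ↔
    Antisquare w ∧ ∀ u, u <:+: w → Antisquare u → u.length < w.length → u.length = 2 := by
  refine ⟨fun h => ⟨h.1, fun u hu ha hlt => ?_⟩, fun h => ⟨h.1, fun u' hu' hne u hu ha => ?_⟩⟩
  · rcases h.2 u hu (by rintro rfl; omega) u (infix_refl u) ha with rfl | rfl <;> rfl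
  · have hlt : u.length < w.length :=
      hu.length_le.trans_lt (hu'.length_le.lt_of_ne fun h => hne (hu'.eq_of_length h))
    obtain ⟨y, hy, rfl⟩ := ha
    have := h.2 _ (hu.trans hu') ⟨y, hy, rfl⟩ hlt
    obtain ⟨a, rfl⟩ : ∃ a, y = [a] := length_eq_one_iff.mp (by simp [comp] at this; omega)
    cases a <;> simp [comp]

def AntisquareAt (c : ℤ → Bool) (r : ℤ) (k : ℕ) : Prop :=
  ∀ j : ℕ, j < k → c (r + k + j) = !c (r + j)

lemma antisquare_take_drop {w : List Bool} {r k : ℕ} (hk : 0 < k) (hrk : r + 2 * k ≤ w.length)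
    (h : AntisquareAt (cyc w) r k) : Antisquare ((w.drop r).take (2 * k)) := by
  have hget : ∀ j < 2 * k, ((w.drop r).take (2 * k)).getD j false = cyc w (r + j) := by
    intro j hj
    rw [getD_eq_getElem _ _ (by simp; omega), getElem_take, getElem_drop,
      ← getD_eq_getElem w false, ← cyc_natCast (by omega)]
    push_cast; rfl
  refine antisquare_of_getD hk (by simp; omega) fun j hj => ?_
  rw [hget _ (by omega), hget _ (by omega), ← h j hj]
  push_cast; ring_nf

lemma take_drop_infix (w : List Bool) (r m : ℕ) : (w.drop r).take m <:+: w :=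
  (take_prefix _ _).isInfix.trans (drop_suffix _ _).isInfix

lemma antisquareAt_of_infix {y w : List Bool} (h : y ++ comp y <:+: w) :
    ∃ s : ℕ, AntisquareAt (cyc w) s y.length := by
  obtain ⟨s, t, rfl⟩ := h
  have hget : ∀ j < 2 * y.length,
      cyc (s ++ (y ++ comp y) ++ t) ((s.length + j : ℕ) : ℤ) = (y ++ comp y).getD j false := by
    intro j hj
    rw [cyc_natCast (by simp [comp]; omega), append_assoc, getD_append_right _ _ _ _ (by omega),
      Nat.add_sub_cancel_left, getD_append _ _ _ _ (by simp [comp]; omega)]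
  refine ⟨s.length, fun j hj => ?_⟩
  have h₁ := hget (y.length + j) (by omega)
  have h₂ := hget j (by omega)
  push_cast at h₁ h₂
  rw [show (s.length : ℤ) + y.length + j = s.length + (y.length + j) by ring, h₁, h₂,
    getD_append_comp hj]

section AntisquareAt

variable {c : ℤ → Bool}

lemma antisquareAt_add_iff {n : ℕ} (hc : ∀ x, c (x + n) = !c x) {r : ℤ} {k : ℕ} :
    AntisquareAt c (r + n) k ↔ AntisquareAt c r k := by
  refine forall₂_congr fun j _ => ?_
  rw [show r + n + k + j = r + k + j + n by ring, show r + n + j = r + j + n by ring, hc, hc,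
    Bool.not_inj_iff]

lemma antisquareAt_of_antiperiodic {n : ℕ} (hc : ∀ x, c (x + n) = !c x) (r : ℤ) :
    AntisquareAt c r n := fun j _ => by rw [add_right_comm, hc]

lemma antisquareAt_comp_add_iff {a r : ℤ} {k : ℕ} :
    AntisquareAt (fun x => c (x + a)) r k ↔ AntisquareAt c (r + a) k :=
  forall₂_congr fun j _ => by
    simp only [show r + k + j + a = r + a + k + j by ring, show r + j + a = r + a + j by ring]

end AntisquareAt

def diffWord (c : ℤ → Bool) (x : ℤ) : Bool := c (x + 1) ^^ c x

section DiffWord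

variable {c : ℤ → Bool}

lemma apply_add_one (x : ℤ) : c (x + 1) = (diffWord c x ^^ c x) := by
  simp [diffWord]

lemma apply_add_one_of_diffWord_true {x : ℤ} (h : diffWord c x = true) : c (x + 1) = !c x := by
  simp [apply_add_one, h]

lemma apply_add_one_of_diffWord_false {x : ℤ} (h : diffWord c x = false) : c (x + 1) = c x := by
  simp [apply_add_one, h]

lemma apply_add_two_of_diffWord_true {x : ℤ} (h₀ : diffWord c x = true)
    (h₁ : diffWord c (x + 1) = true) : c (x + 2) = c x := by
  rw [show x + 2 = x + 1 + 1 by ring, apply_add_one_of_diffWord_true h₁,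
    apply_add_one_of_diffWord_true h₀, Bool.not_not]

lemma apply_add_of_diffWord_false {a : ℤ} {m : ℕ}
    (h : ∀ x, a ≤ x → x < a + m → diffWord c x = false) : c (a + m) = c a := by
  induction m with
  | zero => simp
  | succ m ih =>
    rw [Nat.cast_succ, ← add_assoc, apply_add_one_of_diffWord_false (h _ (by omega) (by omega))]
    exact ih fun x h₁ h₂ => h x h₁ (by omega)

lemma diffWord_add_of_antiperiodic {n : ℕ} (hc : ∀ x, c (x + n) = !c x) (x : ℤ) :
    diffWord c (x + n) = diffWord c x := by
  rw [diffWord, diffWord, add_right_comm x, hc, hc, Bool.not_xor_not]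

lemma antisquareAt_of_diffWord {r : ℤ} {k : ℕ} (hk : c (r + k) = !c r)
    (h : ∀ x, r ≤ x → x + 1 < r + k → diffWord c (x + k) = diffWord c x) :
    AntisquareAt c r k := by
  intro j hj
  induction j with
  | zero => simpa using hk
  | succ j ih =>
    rw [Nat.cast_succ, ← add_assoc, ← add_assoc, add_right_comm r, apply_add_one (c := c),
      h (r + j) (by omega) (by omega), add_right_comm r, ih (by omega),
      apply_add_one (c := c) (r + j), Bool.xor_not]

lemma diffWord_eq_prev_or_eq_next (h₂ : ∀ r, ¬AntisquareAt c r 2) (x : ℤ) :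
    diffWord c (x + 1) = diffWord c x ∨ diffWord c (x + 1) = diffWord c (x + 2) := by
  by_contra! h
  refine h₂ x (antisquareAt_of_diffWord ?_ fun y h₁ h₂ => ?_)
  · rw [show x + (2 : ℕ) = x + 1 + 1 by push_cast; ring, apply_add_one (c := c) (x + 1),
      apply_add_one (c := c) x]
    revert h; cases diffWord c x <;> cases diffWord c (x + 1) <;> cases c x <;> simp
  · obtain rfl : x = y := by omega
    rw [show x + (2 : ℕ) = x + 2 by push_cast; ring]
    revert h; cases diffWord c x <;> cases diffWord c (x + 1) <;> cases diffWord c (x + 2) <;> simp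

lemma not_five_diffWord_true (h₃ : ∀ r, ¬AntisquareAt c r 3) (x : ℤ) :
    ¬(diffWord c x = true ∧ diffWord c (x + 1) = true ∧ diffWord c (x + 2) = true ∧
      diffWord c (x + 3) = true ∧ diffWord c (x + 4) = true) := by
  rintro ⟨h₀, h₁, h₂, h₃', h₄⟩
  refine h₃ x (antisquareAt_of_diffWord ?_ fun y hy₁ hy₂ => ?_)
  · rw [show x + (3 : ℕ) = x + 2 + 1 by push_cast; ring, apply_add_one_of_diffWord_true h₂,
      apply_add_two_of_diffWord_true h₀ h₁]
  · rcases (by omega : x = y ∨ x + 1 = y) with rfl | rfl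
    · rw [show x + (3 : ℕ) = x + 3 by push_cast; ring, h₀, h₃']
    · rw [show x + 1 + (3 : ℕ) = x + 4 by push_cast; ring, h₁, h₄]

lemma exists_diffWord_isolated_run_of_ne
    (hnb : ∀ x, diffWord c (x + 1) = diffWord c x ∨ diffWord c (x + 1) = diffWord c (x + 2))
    (h₅ : ∀ x, ¬(diffWord c x = true ∧ diffWord c (x + 1) = true ∧ diffWord c (x + 2) = true ∧
      diffWord c (x + 3) = true ∧ diffWord c (x + 4) = true))
    (m : ℕ) (s : ℤ) (hs : diffWord c s = false) (hm : diffWord c (s + m) = false)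
    (hne : c (s + m) ≠ c s) :
    ∃ X, diffWord c (X - 1) = false ∧ diffWord c X = true ∧ diffWord c (X + 1) = true ∧
      diffWord c (X + 2) = true ∧ diffWord c (X + 3) = false := by
  induction m using Nat.strong_induction_on generalizing s with
  | _ m ih =>
  -- Runs of ones of length 2 or 4 do not change `c`; skip them (or a single zero) and recurse.
  have skip : ∀ a : ℕ, 0 < a → a ≤ m → diffWord c (s + a) = false → c (s + a) = c s →
      ∃ X, diffWord c (X - 1) = false ∧ diffWord c X = true ∧ diffWord c (X + 1) = true ∧
        diffWord c (X + 2) = true ∧ diffWord c (X + 3) = false := by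
    intro a ha ham hd hca
    refine ih (m - a) (by omega) (s + a) hd ?_ ?_ <;>
      rw [show s + a + ((m - a : ℕ) : ℤ) = s + m by omega]
    · exact hm
    · rwa [hca]
  have hm₀ : m ≠ 0 := by rintro rfl; simp at hne
  have hc₁ : c (s + 1) = c s := apply_add_one_of_diffWord_false hs
  cases h₁ : diffWord c (s + 1)
  · exact skip 1 one_pos (by omega) (by simpa using h₁) (by simpa using hc₁)
  have h₂ : diffWord c (s + 2) = true := by simpa [hs, h₁] using hnb s
  have hm₃ : 3 ≤ m := by
    by_contra!
    interval_cases m <;> simp_all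
  have hc₃ : c (s + 3) = c s := by
    rw [show s + 3 = s + 1 + 2 by ring,
      apply_add_two_of_diffWord_true h₁ (by convert h₂ using 2; ring), hc₁]
  cases h₃ : diffWord c (s + 3)
  · exact skip 3 (by omega) hm₃ (by simpa using h₃) (by simpa using hc₃)
  cases h₄ : diffWord c (s + 4)
  · exact ⟨s + 1, by simpa using hs, h₁, by convert h₂ using 2; ring,
      by convert h₃ using 2; ring, by convert h₄ using 2; ring⟩
  have h₅' : diffWord c (s + 5) = false := by
    by_contra h
    exact h₅ (s + 1) ⟨h₁, by convert h₂ using 2; ring, by convert h₃ using 2; ring,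
      by convert h₄ using 2; ring, by convert (Bool.not_eq_false _).mp h using 2; ring⟩
  have hm₅ : 5 ≤ m := by
    by_contra!
    interval_cases m <;> simp_all
  refine skip 5 (by omega) hm₅ (by simpa using h₅') ?_
  rw [show ((5 : ℕ) : ℤ) = 3 + 2 by norm_num, ← add_assoc,
    apply_add_two_of_diffWord_true h₃ (by convert h₄ using 2; ring), hc₃]

end DiffWord

lemma exists_first_true {p : ℤ → Bool} {a : ℤ} {m : ℕ} (h : p (a + m) = true) :
    ∃ g : ℕ, g ≤ m ∧ p (a + g) = true ∧ ∀ x, a ≤ x → x < a + g → p x = false := by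
  classical
  have hex : ∃ g : ℕ, p (a + g) = true := ⟨m, h⟩
  refine ⟨Nat.find hex, Nat.find_min' hex h, Nat.find_spec hex, fun x h₁ h₂ => ?_⟩
  obtain ⟨j, rfl⟩ : ∃ j : ℕ, x = a + j := ⟨(x - a).toNat, by omega⟩
  simpa using Nat.find_min hex (show j < Nat.find hex by omega)

lemma exists_last_true {p : ℤ → Bool} {a : ℤ} {m : ℕ} (h : p (a - m) = true) :
    ∃ f : ℕ, f ≤ m ∧ p (a - f) = true ∧ ∀ x, a - f < x → x ≤ a → p x = false := by
  obtain ⟨f, hf, h₁, h₂⟩ := exists_first_true (p := fun x => p (-x)) (a := -a) (m := m)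
    (by simpa [sub_eq_add_neg, add_comm] using h)
  refine ⟨f, hf, by simpa [sub_eq_add_neg, add_comm] using h₁, fun x hx₁ hx₂ => ?_⟩
  simpa using h₂ (-x) (by omega) (by omega)

def patHalf (n : ℕ) : List Bool := List.replicate (n - 2) false ++ [true, false]

lemma pat_eq_append_comp (n : ℕ) : pat n = patHalf n ++ comp (patHalf n) := by
  simp [pat, patHalf, comp]

section Pattern

variable {n : ℕ}

lemma length_patHalf (hn : 2 ≤ n) : (patHalf n).length = n := by
  simp [patHalf]; omega

lemma length_pat (hn : 2 ≤ n) : (pat n).length = 2 * n := by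
  simp [pat_eq_append_comp, comp, length_patHalf hn]; omega

lemma getD_patHalf (hn : 2 ≤ n) {i : ℕ} (hi : i < n) :
    (patHalf n).getD i false = decide (i = n - 2) := by
  rcases (by omega : i < n - 2 ∨ i = n - 2 ∨ i = n - 1) with h | rfl | rfl
  · simp [patHalf, getElem?_append_left (by simpa using h : i < (replicate (n - 2) false).length)]
    omega
  · simp [patHalf]
  · rw [patHalf, getD_append_right _ _ _ _ (by simp; omega), length_replicate,
      show n - 1 - (n - 2) = 1 by omega]
    simp; omega

lemma cyc_pat_add (hn : 2 ≤ n) (i : ℤ) : cyc (pat n) (i + n) = !cyc (pat n) i := by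
  have := cyc_append_comp (y := patHalf n) (by simp [patHalf]) i
  rwa [length_patHalf hn, ← pat_eq_append_comp] at this

lemma cyc_pat_of_lt (hn : 2 ≤ n) {i : ℤ} (h₀ : 0 ≤ i) (h₁ : i < n) :
    cyc (pat n) i = decide (i = n - 2) := by
  lift i to ℕ using h₀
  rw [cyc_natCast (by rw [length_pat hn]; omega), pat_eq_append_comp,
    getD_append _ _ _ _ (by rw [length_patHalf hn]; omega), getD_patHalf hn (by omega)]
  simp; omega

lemma cyc_pat_iff (hn : 2 ≤ n) {x : ℤ} (h₀ : 0 ≤ x) (h₁ : x < 3 * n) :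
    cyc (pat n) x = true ↔
      x = n - 2 ∨ (n ≤ x ∧ x < 2 * n ∧ x ≠ 2 * n - 2) ∨ x = 3 * n - 2 := by
  rcases (by omega : x < n ∨ (n ≤ x ∧ x < 2 * n) ∨ 2 * n ≤ x) with h | h | h
  · rw [cyc_pat_of_lt hn h₀ h]; simp; omega
  · rw [show x = x - n + n by ring, cyc_pat_add hn, cyc_pat_of_lt hn (by omega) (by omega)]
    simp; omega
  · rw [show x = x - 2 * n + n + n by ring, cyc_pat_add hn, cyc_pat_add hn,
      cyc_pat_of_lt hn (by omega) (by omega)]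
    simp; omega

lemma not_antisquareAt_cyc_pat (hn : 5 ≤ n) {k : ℕ} (hk : 2 ≤ k) (hkn : k < n) (r : ℤ) :
    ¬AntisquareAt (cyc (pat n)) r k := by
  refine forall_of_add_invariant (P := fun r => ¬AntisquareAt (cyc (pat n)) r k) (n := n)
    (by omega) (fun r => not_congr (antisquareAt_add_iff (cyc_pat_add (by omega))))
    (fun r h₀ h₁ h => ?_) r
  let P : ℤ → Prop := fun x => x = n - 2 ∨ (n ≤ x ∧ x < 2 * n ∧ x ≠ 2 * n - 2) ∨ x = 3 * n - 2
  have key : ∀ j : ℤ, 0 ≤ j → j < k → (P (r + k + j) ↔ ¬P (r + j)) := by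
    intro j hj₀ hj₁
    lift j to ℕ using hj₀
    simp only [P]
    rw [← cyc_pat_iff (x := r + k + j) (by omega) (by omega) (by omega),
      ← cyc_pat_iff (x := r + j) (by omega) (by omega) (by omega), h j (by omega)]
    simp
  -- For every `r < n` and `2 ≤ k < n`, one of these four offsets violates the antisquare condition.
  have h₁ := key (n - 2 - r)
  have h₂ := key 1
  have h₃ := key (n - 3 - r - k)
  have h₄ := key (2 * n - 1 - r - k)
  simp only [P] at h₁ h₂ h₃ h₄
  omega

end Pattern

section Forward

variable {c : ℤ → Bool} {n : ℕ}

lemma antisquareAt_of_gap_after {X : ℤ} {g : ℕ}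
    (hbefore : ∀ x, X - g ≤ x → x < X → diffWord c x = false)
    (h₀ : diffWord c X = true) (h₁ : diffWord c (X + 1) = true) (h₂ : diffWord c (X + 2) = true)
    (hafter : ∀ x, X + 3 ≤ x → x < X + 3 + g → diffWord c x = false)
    (hg : diffWord c (X + 3 + g) = true) (hg₁ : diffWord c (X + 4 + g) = true) :
    AntisquareAt c (X - g) (g + 3) := by
  apply antisquareAt_of_diffWord
  · have h := apply_add_of_diffWord_false (a := X - g) (m := g)
      fun x hx₁ hx₂ => hbefore x hx₁ (by omega)
    rw [sub_add_cancel] at h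
    rw [show X - g + ((g + 3 : ℕ) : ℤ) = X + 2 + 1 by push_cast; ring,
      apply_add_one_of_diffWord_true h₂, apply_add_two_of_diffWord_true h₀ h₁, h]
  · intro x hx₁ hx₂
    rcases (by omega : x < X ∨ X = x ∨ X + 1 = x) with hx | rfl | rfl
    · rw [hbefore x hx₁ hx, hafter _ (by omega) (by omega)]
    · rw [h₀, ← hg]; congr 1; push_cast; ring
    · rw [h₁, ← hg₁]; congr 1; push_cast; ring

lemma antisquareAt_of_gap_before {X : ℤ} {f : ℕ}
    (hf₁ : diffWord c (X - 2 - f) = true) (hf : diffWord c (X - 1 - f) = true)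
    (hbefore : ∀ x, X - f ≤ x → x < X → diffWord c x = false)
    (h₀ : diffWord c X = true) (h₁ : diffWord c (X + 1) = true) (h₂ : diffWord c (X + 2) = true)
    (hafter : ∀ x, X + 3 ≤ x → x < X + 3 + f → diffWord c x = false) :
    AntisquareAt c (X - 2 - f) (f + 3) := by
  apply antisquareAt_of_diffWord
  · have h := apply_add_of_diffWord_false (a := X - f) (m := f)
      fun x hx₁ hx₂ => hbefore x hx₁ (by omega)
    rw [sub_add_cancel] at h
    have h' := apply_add_two_of_diffWord_true hf₁ (by convert hf using 2; ring)
    rw [show X - 2 - f + 2 = X - f by ring] at h'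
    rw [show X - 2 - f + ((f + 3 : ℕ) : ℤ) = X + 1 by push_cast; ring,
      apply_add_one_of_diffWord_true h₀, h, h']
  · intro x hx₁ hx₂
    rcases (by omega : X - 2 - f = x ∨ X - 1 - f = x ∨ X - f ≤ x) with rfl | rfl | hx
    · rw [hf₁, ← h₁]; congr 1; push_cast; ring
    · rw [hf, ← h₂]; congr 1; push_cast; ring
    · rw [hbefore x hx (by omega), hafter _ (by omega) (by omega)]

lemma exists_antisquareAt_of_gaps {X : ℤ} {f g : ℕ}
    (hf₁ : diffWord c (X - 2 - f) = true) (hf : diffWord c (X - 1 - f) = true)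
    (hbefore : ∀ x, X - 1 - f < x → x ≤ X - 1 → diffWord c x = false)
    (h₀ : diffWord c X = true) (h₁ : diffWord c (X + 1) = true) (h₂ : diffWord c (X + 2) = true)
    (hafter : ∀ x, X + 3 ≤ x → x < X + 3 + g → diffWord c x = false)
    (hg : diffWord c (X + 3 + g) = true) (hg₁ : diffWord c (X + 4 + g) = true) :
    ∃ r k, 2 ≤ k ∧ 2 * k ≤ f + g + 6 ∧ AntisquareAt c r k := by
  rcases le_or_gt g f with hgf | hfg
  · exact ⟨_, _, by omega, by omega, antisquareAt_of_gap_after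
      (fun x h₁ h₂ => hbefore x (by omega) (by omega)) h₀ h₁ h₂ hafter hg hg₁⟩
  · exact ⟨_, _, by omega, by omega, antisquareAt_of_gap_before hf₁ hf
      (fun x h₁ h₂ => hbefore x (by omega) (by omega)) h₀ h₁ h₂
      (fun x h₁ h₂ => hafter x h₁ (by omega))⟩

lemma exists_diffWord_isolated_run (hn : 5 ≤ n) (hc : ∀ x, c (x + n) = !c x)
    (hfree : ∀ r k, 2 ≤ k → 2 * k ≤ n + 1 → ¬AntisquareAt c r k) :
    ∃ X, diffWord c (X - 1) = false ∧ diffWord c X = true ∧ diffWord c (X + 1) = true ∧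
      diffWord c (X + 2) = true ∧ diffWord c (X + 3) = false := by
  have h₅ := not_five_diffWord_true fun r => hfree r 3 (by omega) (by omega)
  obtain ⟨s, hs⟩ : ∃ s, diffWord c s = false := by
    by_contra! h
    exact h₅ 0 (by simp_all)
  exact exists_diffWord_isolated_run_of_ne
    (diffWord_eq_prev_or_eq_next fun r => hfree r 2 le_rfl (by omega)) h₅ n s hs
    (by rwa [diffWord_add_of_antiperiodic hc]) (by simp [hc])

theorem exists_diffWord_zeros_then_ones (hn : 5 ≤ n) (hc : ∀ x, c (x + n) = !c x)
    (hfree : ∀ r k, 2 ≤ k → 2 * k ≤ n + 1 → ¬AntisquareAt c r k) :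
    ∃ R : ℤ, (∀ x, R ≤ x → x < R + n - 3 → diffWord c x = false) ∧
      diffWord c (R + n - 3) = true ∧ diffWord c (R + n - 2) = true := by
  have hper := diffWord_add_of_antiperiodic hc
  have hnb := diffWord_eq_prev_or_eq_next fun r => hfree r 2 le_rfl (by omega)
  obtain ⟨X, hX₀, hX, hX₁, hX₂, hX₃⟩ := exists_diffWord_isolated_run hn hc hfree
  obtain ⟨g, hg_le, hg, hafter⟩ := exists_first_true (p := diffWord c) (a := X + 3) (m := n - 3)
    (by rw [show X + 3 + ((n - 3 : ℕ) : ℤ) = X + n by omega, hper, hX])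
  rcases Nat.lt_or_ge g (n - 3) with hg_lt | hg_ge
  swap
  · refine ⟨X + 3, fun x h₁ h₂ => hafter x h₁ (by omega), ?_, ?_⟩
    · rw [show X + 3 + n - 3 = X + n by ring, hper, hX]
    · rw [show X + 3 + n - 2 = X + 1 + n by ring, hper, hX₁]
  exfalso
  obtain ⟨f, hf_le, hf, hbefore⟩ := exists_last_true (p := diffWord c) (a := X - 1) (m := n - 3)
    (by rw [← hper, show X - 1 - ((n - 3 : ℕ) : ℤ) + n = X + 2 by omega, hX₂])
  have hg₀ : 0 < g := Nat.pos_of_ne_zero (by rintro rfl; simp [hX₃] at hg)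
  have hf₀ : 0 < f := Nat.pos_of_ne_zero (by rintro rfl; simp [hX₀] at hf)
  have hg₁ : diffWord c (X + 4 + g) = true := by
    have := hnb (X + 2 + g)
    rw [show X + 2 + g + 1 = X + 3 + g by ring, show X + 2 + g + 2 = X + 4 + g by ring, hg,
      hafter (X + 2 + g) (by omega) (by omega)] at this
    simpa using this
  have hf₁ : diffWord c (X - 2 - f) = true := by
    have := hnb (X - 2 - f)
    rw [show X - 2 - f + 1 = X - 1 - f by ring, show X - 2 - f + 2 = X - f by ring, hf,
      hbefore (X - f) (by omega) (by omega)] at this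
    simp only [Bool.true_eq_false, or_false] at this
    exact this.symm
  -- Otherwise the run of ones starting at `X + 3 + g` would reach the zeros just before `X + n`.
  have hfg : f + g + 5 ≤ n := by
    by_contra! h
    rcases (by omega : g + 4 = n ∨ X + 4 + g - n ≤ X - 1) with h' | h'
    · have := hper (X - 1)
      rw [show X - 1 + n = X + 3 + g by omega, hg, hX₀] at this
      simp at this
    · have := hper (X + 4 + g - n)
      rw [sub_add_cancel, hg₁, hbefore _ (by omega) h'] at this
      simp at this
  obtain ⟨r, k, hk, hkfg, hA⟩ :=
    exists_antisquareAt_of_gaps hf₁ hf hbefore hX hX₁ hX₂ hafter hg hg₁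
  exact hfree r k hk (by omega) hA

lemma apply_add_eq_cyc_pat (hn : 3 ≤ n) (hc : ∀ x, c (x + n) = !c x) {R : ℤ} (hR : c R = false)
    (hzero : ∀ x, R ≤ x → x < R + n - 3 → diffWord c x = false)
    (h₁ : diffWord c (R + n - 3) = true) (h₂ : diffWord c (R + n - 2) = true) (i : ℤ) :
    c (R + i) = cyc (pat n) i := by
  refine forall_of_add_invariant (P := fun i => c (R + i) = cyc (pat n) i) (n := n) (by omega)
    (fun i => ?_) (fun i h₀ h₁' => ?_) i
  · rw [← add_assoc, hc, cyc_pat_add (by omega), Bool.not_inj_iff]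
  have hconst : ∀ m : ℕ, m ≤ n - 3 → c (R + m) = false := fun m hm =>
    hR ▸ apply_add_of_diffWord_false fun x hx₁ hx₂ => hzero x hx₁ (by omega)
  have hn₂ : c (R + n - 2) = true := by
    rw [show R + n - 2 = R + n - 3 + 1 by ring, apply_add_one_of_diffWord_true h₁,
      show R + n - 3 = R + ((n - 3 : ℕ) : ℤ) by omega, hconst _ le_rfl]; rfl
  rw [cyc_pat_of_lt (by omega) h₀ h₁']
  rcases (by omega : i ≤ n - 3 ∨ i = n - 2 ∨ i = n - 1) with h | rfl | rfl
  · lift i to ℕ using h₀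
    rw [hconst i (by omega)]; simp; omega
  · rw [← add_sub_assoc, hn₂]; simp
  · rw [← add_sub_assoc, show R + n - 1 = R + n - 2 + 1 by ring,
      apply_add_one_of_diffWord_true h₂, hn₂]; simp

theorem exists_shift_eq_cyc_pat (hn : 5 ≤ n) (hc : ∀ x, c (x + n) = !c x)
    (hfree : ∀ r k, 2 ≤ k → 2 * k ≤ n + 1 → ¬AntisquareAt c r k) :
    ∃ R, ∀ i, c (R + i) = cyc (pat n) i := by
  obtain ⟨R, hzero, h₁, h₂⟩ := exists_diffWord_zeros_then_ones hn hc hfree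
  have hper := diffWord_add_of_antiperiodic hc
  cases hR : c R
  · exact ⟨R, apply_add_eq_cyc_pat (by omega) hc hR hzero h₁ h₂⟩
  · refine ⟨R + n, apply_add_eq_cyc_pat (by omega) hc (by rw [hc, hR]; rfl) (fun x hx₁ hx₂ => ?_)
      (by rwa [add_right_comm, add_sub_right_comm, hper])
      (by rwa [add_right_comm, add_sub_right_comm, hper])⟩
    rw [← sub_add_cancel x n, hper]
    exact hzero _ (by omega) (by omega)

end Forward

theorem exists_append_eq_of_minAnti {y : List Bool} (hn : 5 ≤ y.length)
    (h : MinAnti (y ++ comp y)) : ∃ u v, pat y.length = u ++ v ∧ y ++ comp y = v ++ u := by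
  set n := y.length
  set w := y ++ comp y
  have hw : w.length = 2 * n := by simp [w, n, comp]; omega
  have hc : ∀ x, cyc w (x + n) = !cyc w x := cyc_append_comp (by rintro rfl; simp [n] at hn)
  -- Up to a shift by `n`, which complements, a window of length `2 * k ≤ n + 1` lies inside `w`.
  have hfree : ∀ r k, 2 ≤ k → 2 * k ≤ n + 1 → ¬AntisquareAt (cyc w) r k := by
    intro r k hk hkn
    refine forall_of_add_invariant (P := fun r => ¬AntisquareAt (cyc w) r k) (n := n) (by omega)
      (fun r => not_congr (antisquareAt_add_iff hc)) (fun r h₀ h₁ hA => ?_) r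
    lift r to ℕ using h₀
    have := (minAnti_iff.mp h).2 _ (take_drop_infix w r (2 * k))
      (antisquare_take_drop (by omega) (by omega) hA) (by simp; omega)
    simp at this; omega
  obtain ⟨R, hR⟩ := exists_shift_eq_cyc_pat hn hc hfree
  refine exists_append_eq_of_cyc_eq (by rw [hw, length_pat (by omega)]) (-R) fun i => ?_
  rw [← hR, add_neg_cancel_comm_assoc]

theorem minAnti_of_pat_eq_append {n : ℕ} (hn : 5 ≤ n) {u v : List Bool} (h : pat n = u ++ v) :
    MinAnti (v ++ u) := by
  have hcyc : cyc (v ++ u) = fun i => cyc (pat n) (i + u.length) := by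
    funext i; rw [h, ← rotate_append_length_eq, cyc_rotate]
  have hlen : (v ++ u).length = 2 * n := by
    rw [length_append, add_comm, ← length_append, ← h, length_pat (by omega)]
  refine minAnti_iff.mpr ⟨?_, fun x hx hA hlt => ?_⟩
  · have := antisquare_take_drop (w := v ++ u) (r := 0) (k := n) (by omega) (by omega)
      (by rw [hcyc, antisquareAt_comp_add_iff]
          exact antisquareAt_of_antiperiodic (cyc_pat_add (by omega)) _)
    rwa [drop_zero, ← hlen, take_length] at this
  · obtain ⟨y, hy, rfl⟩ := hA
    obtain ⟨s, hs⟩ := antisquareAt_of_infix hx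
    have hk : y.length < 2 := by
      by_contra! hk
      refine not_antisquareAt_cyc_pat hn hk ?_ (s + u.length) ?_
      · rw [hlen] at hlt; simp [comp] at hlt; omega
      · rwa [hcyc, antisquareAt_comp_add_iff] at hs
    have : y.length ≠ 0 := by simpa using hy
    simp [comp]; omega

lemma antisquare_iff_take (x : List Bool) :
    Antisquare x ↔ x ≠ [] ∧ x = x.take (x.length / 2) ++ comp (x.take (x.length / 2)) := by
  refine ⟨fun ⟨y, hy, hx⟩ => ⟨by simp [hx, hy], ?_⟩, fun ⟨hx, h⟩ => ⟨_, fun h' => ?_, h⟩⟩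
  · have : x.length / 2 = y.length := by simp [hx, comp]; omega
    rw [this, hx, take_left]
  · rw [h'] at h
    exact hx (by simpa [comp] using h)

instance : DecidablePred Antisquare := fun x => decidable_of_iff _ (antisquare_iff_take x).symm

lemma mem_flatMap_tails_inits {u w : List Bool} : u ∈ w.tails.flatMap inits ↔ u <:+: w := by
  simp only [mem_flatMap, mem_tails, mem_inits, infix_iff_prefix_suffix]
  exact exists_congr fun _ => and_comm

instance : DecidablePred MinAnti := fun w =>
  decidable_of_iff (Antisquare w ∧ ∀ u ∈ w.tails.flatMap inits,
      Antisquare u → u.length < w.length → u.length = 2) <| by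
    simp only [minAnti_iff, mem_flatMap_tails_inits]

def smallMinAntisquares : List (List Bool) :=
  [[false, true], [true, false], [false, false, true, true], [false, true, true, false],
    [true, false, false, true], [true, true, false, false], [false, true, false, true, false, true],
    [true, false, true, false, true, false]]

theorem mem_smallMinAntisquares_of_minAnti {y : List Bool} (hy : y.length ≤ 4)
    (h : MinAnti (y ++ comp y)) : y ++ comp y ∈ smallMinAntisquares := by
  revert h
  match y, hy with
  | [], _ => decide
  | [a], _ => cases a <;> decide
  | [a, b], _ => cases a <;> cases b <;> decide
  | [a, b, c], _ => cases a <;> cases b <;> cases c <;> decide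
  | [a, b, c, d], _ => cases a <;> cases b <;> cases c <;> cases d <;> decide

/-- characterization of the minimal antisquares. -/
theorem stmt_12 (w : List Bool) :
    MinAnti w ↔
      (w = [false, true] ∨ w = [true, false] ∨
       w = [false, false, true, true] ∨ w = [false, true, true, false] ∨
       w = [true, false, false, true] ∨ w = [true, true, false, false] ∨
       w = [false, true, false, true, false, true] ∨
       w = [true, false, true, false, true, false] ∨
       ∃ n, 5 ≤ n ∧ ∃ u v : List Bool, pat n = u ++ v ∧ w = v ++ u) := by
  refine ⟨fun h => ?_, ?_⟩
  · obtain ⟨y, -, rfl⟩ := h.1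
    rcases le_or_gt 5 y.length with hn | hn
    · iterate 8 right
      exact ⟨_, hn, exists_append_eq_of_minAnti hn h⟩
    · have := mem_smallMinAntisquares_of_minAnti (by omega) h
      simp only [smallMinAntisquares, mem_cons, not_mem_nil, or_false] at this
      tauto
  · rintro (rfl | rfl | rfl | rfl | rfl | rfl | rfl | rfl | ⟨n, hn, u, v, h, rfl⟩)
    iterate 8 decide
    exact minAnti_of_pat_eq_append hn h
end

section
/- A binary word w is a minimal antisquare if and only if every conjugate (cyclic shift) of w is a minimal antisquare. -/
def F (w : List Bool) (i : ℕ) : Bool := w.getD i false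

lemma length_comp (y : List Bool) : (comp y).length = y.length := by simp [comp]

lemma F_lt {w : List Bool} {i : ℕ} (h : i < w.length) : F w i = w[i] :=
  List.getD_eq_getElem w false h

lemma AS_idx {z : List Bool} :
    Antisquare z ↔ ∃ m, 1 ≤ m ∧ z.length = 2*m ∧ ∀ i < m, F z (m+i) = !F z i := by
  constructor
  · rintro ⟨y, hy, rfl⟩
    have hyl : 1 ≤ y.length := by
      cases y with
      | nil => simp at hy
      | cons a t => simp
    refine ⟨y.length, hyl, by simp [length_comp]; omega, ?_⟩
    intro i hi
    have h1 : y.length + i < (y ++ comp y).length := by simp [length_comp]; omega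
    have h2 : i < (y ++ comp y).length := by simp [length_comp]; omega
    rw [F_lt h1, F_lt h2]
    rw [List.getElem_append_right (by omega), List.getElem_append_left (by omega)]
    simp [comp]
  · rintro ⟨m, hm, hlen, hcond⟩
    have key : z.drop m = comp (z.take m) := by
      apply List.ext_getElem
      · simp [comp]; omega
      · intro i h1 h2
        have hile : i < m := by simp at h1; omega
        have hc := hcond i hile
        rw [F_lt (by omega), F_lt (by omega)] at hc
        rw [List.getElem_drop]
        simp only [comp, List.getElem_map, List.getElem_take]
        exact hc
    refine ⟨z.take m, ?_, ?_⟩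
    · intro h
      have := congrArg List.length h
      simp [hlen] at this
      omega
    · rw [← key]; exact (List.take_append_drop m z).symm

/-- no inner antisquare (index form) -/
def NoInner (w : List Bool) : Prop :=
  ∀ p m, 2 ≤ m → p + 2*m ≤ w.length → ¬(p = 0 ∧ 2*m = w.length) →
    ¬(∀ i < m, F w (p+m+i) = !F w (p+i))

lemma infix_F {s z t w : List Bool} (h : s ++ z ++ t = w) {i : ℕ} (hi : i < z.length) :
    F w (s.length + i) = F z i := by
  subst h
  have h1 : s.length + i < (s ++ z ++ t).length := by simp; omega
  rw [F_lt h1, F_lt hi]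
  rw [List.getElem_append_left (by simp; omega), List.getElem_append_right (by omega)]
  congr 1
  omega

lemma factor_infix (w : List Bool) (p k : ℕ) : (w.drop p).take k <:+: w :=
  ((List.take_prefix k (w.drop p)).isInfix).trans (List.drop_suffix p w).isInfix

lemma factor_F {w : List Bool} {p k i : ℕ} (hik : i < k) (h : p + k ≤ w.length) :
    F ((w.drop p).take k) i = F w (p + i) := by
  have h1 : i < ((w.drop p).take k).length := by simp; omega
  rw [F_lt h1, F_lt (by omega)]
  rw [List.getElem_take, List.getElem_drop]

lemma factor_len {w : List Bool} {p k : ℕ} (h : p + k ≤ w.length) :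
    ((w.drop p).take k).length = k := by simp; omega

lemma two_antisquare {z : List Bool} (hz : Antisquare z) (hl : z.length = 2) :
    z = [false, true] ∨ z = [true, false] := by
  obtain ⟨y, hy, rfl⟩ := hz
  have : y.length = 1 := by simp [length_comp] at hl; omega
  obtain ⟨b, rfl⟩ : ∃ b, y = [b] := by
    cases y with
    | nil => simp at this
    | cons a t =>
      cases t with
      | nil => exact ⟨a, rfl⟩
      | cons c u => simp at this
  cases b
  · left; simp [comp]
  · right; simp [comp]

/-- characterization of MinAnti -/
lemma minAnti_iff_s13 {w : List Bool} : MinAnti w ↔ Antisquare w ∧ NoInner w := by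
  constructor
  · rintro ⟨hA, hmin⟩
    refine ⟨hA, ?_⟩
    intro p m hm hle hne hall
    set z := (w.drop p).take (2*m) with hz
    have hzl : z.length = 2*m := factor_len hle
    have hzA : Antisquare z := by
      rw [AS_idx]
      refine ⟨m, by omega, hzl, ?_⟩
      intro i hi
      rw [hz, factor_F (show m+i < 2*m by omega) hle, factor_F (show i < 2*m by omega) hle]
      rw [show p + (m+i) = p + m + i by omega]
      exact hall i hi
    have hzw : z ≠ w := by
      intro h
      have := congrArg List.length h
      rw [hzl] at this
      exact hne ⟨by omega, this⟩
    have := hmin z (factor_infix w p (2*m)) hzw z (List.infix_refl z) hzA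
    rcases this with h | h <;> · have := congrArg List.length h; simp [hzl] at this; omega
  · rintro ⟨hA, hNI⟩
    refine ⟨hA, ?_⟩
    intro u hinf hne z hzu hzA
    have hzw : z <:+: w := hzu.trans hinf
    obtain ⟨m, hm1, hzl, hcond⟩ := AS_idx.mp hzA
    by_cases hm : 2 ≤ m
    · exfalso
      obtain ⟨s, t, hst⟩ := hzw
      have hb : s.length + 2*m ≤ w.length := by
        have := congrArg List.length hst
        simp [hzl] at this
        omega
      by_cases hfull : s.length = 0 ∧ 2*m = w.length
      · have h1 : z.length ≤ u.length := hzu.length_le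
        have h2 : u.length ≤ w.length := hinf.length_le
        exact hne (hinf.eq_of_length (by omega))
      · apply hNI s.length m hm hb (by tauto)
        intro i hi
        have e1 : F w (s.length + (m + i)) = F z (m+i) := infix_F hst (by omega)
        have e2 : F w (s.length + i) = F z i := infix_F hst (by omega)
        rw [show s.length + m + i = s.length + (m+i) by omega, e1, e2]
        exact hcond i hi
    · exact two_antisquare hzA (by omega)

lemma core (f : ℕ → Bool) (m d : ℕ) (hm : 2 ≤ m) (hd : 1 ≤ d)
    (G : ∀ i < m + d, f (i + (m+d)) = !f i)
    (A : ∀ i, i + 1 < m → f (2*d+1+i+m) = !f (2*d+1+i))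
    (star : f 0 = !f (m + 2*d)) :
    ∃ p' m', 2 ≤ m' ∧ p' + 2*m' ≤ 2*(m+d) ∧ ¬(p' = 0 ∧ m' = m + d) ∧
      ∀ i < m', f (p'+m'+i) = !f (p'+i) := by
  have f0d : f 0 = f d := by
    have hG := G d (by omega)
    rw [show d + (m+d) = m + 2*d by omega] at hG
    rw [hG] at star
    simpa using star
  by_cases hcase : m ≤ d + 1
  · -- case 1
    obtain ⟨c, hc⟩ : ∃ c, d + 1 = m + c := ⟨d+1-m, by omega⟩
    refine ⟨c, m, hm, by omega, by rintro ⟨h1, h2⟩; omega, ?_⟩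
    intro i hi
    by_cases hil : i + 1 < m
    · have hA := A i hil
      have hGjm := G (c+i+m) (by omega)
      have hGj := G (c+i) (by omega)
      rw [show c+i+m+(m+d) = 2*d+1+i+m by omega] at hGjm
      rw [show c+i+(m+d) = 2*d+1+i by omega] at hGj
      have h1 : (!f (c+i+m)) = !(!f (c+i)) := by rw [← hGjm, hA, hGj]
      rw [show c+m+i = c+i+m by omega]
      simpa using congrArg (fun b => !b) h1
    · have hieq : i = m - 1 := by omega
      rw [show c+m+i = 0+(m+d) by omega, show c+i = d by omega, G 0 (by omega), f0d]
  · -- case 2 : d + 2 ≤ m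
    have B : ∀ q ≤ d, f (q + m) = !f q := by
      intro q hq
      rcases Nat.lt_or_ge q d with h | h
      · have hA := A (q + m - (d+1)) (by omega)
        rw [show 2*d+1+(q+m-(d+1))+m = (q+m)+(m+d) by omega,
            show 2*d+1+(q+m-(d+1)) = q+(m+d) by omega] at hA
        rw [G (q+m) (by omega), G q (by omega)] at hA
        simpa using congrArg (fun b => !b) hA
      · have hq' : q = d := by omega
        rw [hq', show d + m = 0+(m+d) by omega, G 0 (by omega), f0d]
    have Per : ∀ r, d+1 ≤ r → r ≤ m + d → f r = f (r + d) := by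
      intro r h1 h2
      rcases Nat.lt_or_ge r m with h | h
      · have hA := A (r - (d+1)) (by omega)
        rw [show 2*d+1+(r-(d+1))+m = r+(m+d) by omega,
            show 2*d+1+(r-(d+1)) = r + d by omega] at hA
        rw [G r (by omega)] at hA
        simpa using congrArg (fun b => !b) hA
      · have hB := B (r - m) (by omega)
        have hG := G (r - m) (by omega)
        rw [show r - m + m = r by omega] at hB
        rw [show r - m + (m+d) = r + d by omega] at hG
        rw [hB, hG]
    have Chain : ∀ k a, d+1 ≤ a → a + k*d ≤ m + 2*d → f (a + k*d) = f a := by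
      intro k
      induction k with
      | zero => intro a _ _; simp
      | succ k ih =>
        intro a h1 h2
        have e : a + (k+1)*d = a + d + k*d := by ring
        rw [e] at h2 ⊢
        have hle : a + d ≤ m + 2*d := le_trans (Nat.le_add_right _ _) h2
        rw [ih (a+d) (by omega) h2]
        exact (Per a h1 (by omega)).symm
    obtain ⟨E, Q, hEQ, hElt⟩ : ∃ E Q, m = d + Q * d + E ∧ E < d := by
      obtain ⟨q1, hq1'⟩ : ∃ q1, m / d = q1 + 1 :=
        ⟨m / d - 1, by
          have := (Nat.one_le_div_iff (show 0 < d by omega)).2 (show d ≤ m by omega)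
          omega⟩
      refine ⟨m % d, q1, ?_, Nat.mod_lt _ (by omega)⟩
      have h2 := Nat.div_add_mod m d
      rw [hq1'] at h2
      have h3 : d * (q1 + 1) = d + q1 * d := by ring
      rw [h3] at h2
      exact h2.symm
    have R : ∀ x, x ≤ d → 1 ≤ x + E → f (x + d + E) = !f x := by
      intro x hx h1
      have hB := B x hx
      have e2 : x + m = (x + d + E) + Q*d := by rw [hEQ]; ring
      rw [e2] at hB
      rw [Chain Q (x+d+E) (by omega) (by rw [← e2]; omega)] at hB
      exact hB
    rcases Nat.eq_zero_or_pos E with hE0 | hEpos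
    · rcases Nat.lt_or_ge d 2 with hd1 | hd2
      · -- d = 1
        have hd' : d = 1 := by omega
        subst hd'
        refine ⟨0, 2, le_refl 2, by omega, by rintro ⟨h1, h2⟩; omega, ?_⟩
        intro i hi
        interval_cases i
        · have hc := Chain (m-2) 2 (by omega) (by omega)
          rw [show 2 + (m-2)*1 = m by omega] at hc
          have hb0 := B 0 (by omega)
          rw [show (0:ℕ)+m = m by omega, hc] at hb0
          simpa using hb0
        · have hc := Chain (m-2) 3 (by omega) (by omega)
          rw [show 3 + (m-2)*1 = m+1 by omega] at hc
          have hb1 := B 1 (by omega)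
          rw [show (1:ℕ)+m = m+1 by omega, hc] at hb1
          simpa using hb1
      · -- d ≥ 2, E = 0
        refine ⟨1, d, hd2, by omega, by rintro ⟨h1, h2⟩; omega, ?_⟩
        intro i hi
        have hr := R (1+i) (by omega) (by omega)
        rw [show 1+d+i = 1+i+d+E by omega]
        exact hr
    · rcases Nat.lt_or_ge E 2 with hE1 | hE2
      · -- E = 1
        refine ⟨0, d+1, by omega, by omega, by rintro ⟨h1, h2⟩; omega, ?_⟩
        intro i hi
        have hr := R i (by omega) (by omega)
        rw [show 0+(d+1)+i = i+d+E by omega, show 0+i = i by omega]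
        exact hr
      · -- E ≥ 2
        obtain ⟨c, hcE⟩ : ∃ c, d + 1 = E + c := ⟨d+1-E, by omega⟩
        refine ⟨c, E, hE2, by omega, by rintro ⟨h1, h2⟩; omega, ?_⟩
        intro i hi
        have hr := R (c+i) (by omega) (by omega)
        have hp := Per (c+i+E) (by omega) (by omega)
        rw [show c+E+i = c+i+E by omega, hp, show c+i+E+d = c+i+d+E by omega]
        exact hr

lemma F_rotate {w : List Bool} (hw : 0 < w.length) {j : ℕ} (hj : j < w.length) :
    F (w.rotate 1) j = F w ((j+1) % w.length) := by
  have hj' : j < (w.rotate 1).length := by rw [List.length_rotate]; exact hj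
  rw [F_lt hj', F_lt (Nat.mod_lt _ hw)]
  exact List.getElem_rotate w 1 j hj'

lemma AS_rotate {w : List Bool} (hA : Antisquare w) : Antisquare (w.rotate 1) := by
  obtain ⟨y, hy, hw⟩ := hA
  cases y with
  | nil => simp at hy
  | cons a y' =>
    refine ⟨y' ++ [!a], by simp, ?_⟩
    rw [hw]
    rw [show ((a :: y') ++ comp (a :: y')) = a :: (y' ++ comp (a :: y')) by simp]
    rw [List.rotate_cons_succ, List.rotate_zero]
    simp [comp]

lemma step {w : List Bool} (h : MinAnti w) : MinAnti (w.rotate 1) := by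
  rw [minAnti_iff_s13] at h ⊢
  obtain ⟨hA, hNI⟩ := h
  obtain ⟨n, hn1, hlen, hG⟩ := AS_idx.mp hA
  refine ⟨AS_rotate hA, ?_⟩
  intro p m hm hle hne hall
  rw [List.length_rotate] at hle hne
  have hwpos : 0 < w.length := by omega
  rcases Nat.lt_or_ge (p + 2*m) (2*n) with hlt | hge
  · apply hNI (p+1) m hm (by omega) (by rintro ⟨h1, h2⟩; omega)
    intro i hi
    have h1 := hall i hi
    rw [F_rotate hwpos (by omega), F_rotate hwpos (by omega)] at h1
    rw [Nat.mod_eq_of_lt (by omega), Nat.mod_eq_of_lt (by omega)] at h1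
    rw [show p+1+m+i = p+m+i+1 by omega, show p+1+i = p+i+1 by omega]
    exact h1
  · have hpe : p + 2*m = 2*n := by omega
    have hp1 : 1 ≤ p := by
      rcases Nat.eq_zero_or_pos p with h0 | hpos
      · exact absurd ⟨h0, by omega⟩ hne
      · exact hpos
    have hmn : m < n := by omega
    have hG' : ∀ i < m + (n-m), F w (i + (m+(n-m))) = !F w i := by
      intro i hi
      have := hG i (by omega)
      rw [show n + i = i + (m+(n-m)) by omega] at this
      exact this
    have hA' : ∀ i, i + 1 < m → F w (2*(n-m)+1+i+m) = !F w (2*(n-m)+1+i) := by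
      intro i hii
      have h1 := hall i (by omega)
      rw [F_rotate hwpos (by omega), F_rotate hwpos (by omega)] at h1
      rw [Nat.mod_eq_of_lt (by omega), Nat.mod_eq_of_lt (by omega)] at h1
      rw [show p+m+i+1 = 2*(n-m)+1+i+m by omega, show p+i+1 = 2*(n-m)+1+i by omega] at h1
      exact h1
    have hstar : F w 0 = !F w (m + 2*(n-m)) := by
      have h1 := hall (m-1) (by omega)
      rw [F_rotate hwpos (by omega), F_rotate hwpos (by omega)] at h1
      rw [hlen] at h1
      rw [show p+m+(m-1)+1 = 2*n by omega, Nat.mod_self] at h1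
      rw [Nat.mod_eq_of_lt (by omega)] at h1
      rw [show p+(m-1)+1 = m + 2*(n-m) by omega] at h1
      exact h1
    obtain ⟨p', m', hm', hble, hne', hcond⟩ :=
      core (F w) m (n-m) hm (by omega) hG' hA' hstar
    exact hNI p' m' hm' (by omega) (by rintro ⟨h1, h2⟩; exact hne' ⟨h1, by omega⟩) hcond


/-- a binary word is a minimal antisquare if and only if every
conjugate of it is a minimal antisquare. -/
theorem stmt_13 (w : List Bool) :
    MinAnti w ↔ ∀ u v : List Bool, w = u ++ v → MinAnti (v ++ u) := by
  constructor
  · intro h u v huv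
    have hk : ∀ k, MinAnti (w.rotate k) := by
      intro k
      induction k with
      | zero => simpa [List.rotate_zero] using h
      | succ k ih => exact List.rotate_rotate w k 1 ▸ step ih
    have hvu : v ++ u = w.rotate u.length := by
      subst huv
      rw [List.rotate_eq_drop_append_take (by simp), List.drop_left, List.take_left]
    rw [hvu]
    exact hk u.length
  · intro h
    have := h w [] (by simp)
    simpa using this
end

section
/- If a nonempty binary word x is an antisquare, then the number of runs of x is congruent to 2 or 3 modulo 4. -/
/-- The number of runs (maximal blocks of identical consecutive symbols) of a word. -/
def runCount (x : List Bool) : ℕ := (x.destutter (· ≠ ·)).length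

/-!
Write the antisquare as `y ++ comp y`. Complementing a word does not change its number of runs,
and concatenating two words adds their run counts, minus one when the last letter of the first
equals the first letter of the second. The run count `r` of `y` is odd exactly when `y` begins and
ends with the same letter, since runs alternate between `0` and `1`. If it does, the junction
`y`/`comp y` is a change of letter and the antisquare has `2r ≡ 2 (mod 4)` runs; otherwise `r` is
even, the junction merges two runs, and there are `2r - 1 ≡ 3 (mod 4)` runs.
-/

namespace List

theorem length_destutter'_ne_append_cons {α : Type*} [DecidableEq α] (a b : α) (l m : List α) :
    ((l ++ b :: m).destutter' (· ≠ ·) a).length +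
        (if (a :: l).getLast (cons_ne_nil a l) = b then 1 else 0) =
      (l.destutter' (· ≠ ·) a).length + (m.destutter' (· ≠ ·) b).length := by
  induction l generalizing a with
  | nil =>
    rw [nil_append, destutter'_cons, destutter'_nil]
    by_cases h : a = b
    · subst h; simp [Nat.add_comm]
    · simp [h, Nat.add_comm]
  | cons c l ih =>
    rw [cons_append, destutter'_cons, destutter'_cons, getLast_cons_cons]
    by_cases h : a = c
    · subst h; simpa using ih a
    · rw [if_pos h, if_pos h, length_cons, length_cons]
      have := ih c
      omega

theorem odd_length_destutter'_ne_iff (a : Bool) (l : List Bool) :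
    Odd (l.destutter' (· ≠ ·) a).length ↔ (a :: l).getLast (cons_ne_nil a l) = a := by
  induction l generalizing a with
  | nil => simp
  | cons c l ih =>
    rw [destutter'_cons, getLast_cons_cons]
    by_cases h : a = c
    · subst h; simpa using ih a
    · rw [if_pos h, length_cons, Nat.odd_add_one, ih c]
      revert h; cases a <;> cases c <;> simp

end List

open List

theorem runCount_append {u v : List Bool} (hu : u ≠ []) (hv : v ≠ []) :
    runCount (u ++ v) + (if u.getLast hu = v.head hv then 1 else 0) = runCount u + runCount v := by
  obtain ⟨a, l, rfl⟩ := exists_cons_of_ne_nil hu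
  obtain ⟨b, m, rfl⟩ := exists_cons_of_ne_nil hv
  simp only [runCount, cons_append, destutter_cons', head_cons]
  exact length_destutter'_ne_append_cons a b l m

theorem odd_runCount_iff {u : List Bool} (hu : u ≠ []) :
    Odd (runCount u) ↔ u.getLast hu = u.head hu := by
  obtain ⟨a, l, rfl⟩ := exists_cons_of_ne_nil hu
  rw [runCount, destutter_cons']
  exact odd_length_destutter'_ne_iff a l

theorem runCount_comp (x : List Bool) : runCount (comp x) = runCount x :=
  (congrArg length (map_destutter_ne x Bool.not_injective)).symm.trans (length_map _)

theorem comp_ne_nil {x : List Bool} (hx : x ≠ []) : comp x ≠ [] := by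
  simpa [comp] using hx

theorem head_comp {x : List Bool} (hx : x ≠ []) :
    (comp x).head (comp_ne_nil hx) = !x.head hx := by
  simp [comp, head_map]

/-- the number of runs of an antisquare is ≡ 2 or 3 (mod 4). -/
theorem stmt_14 (x : List Bool) (hx : Antisquare x) :
    runCount x % 4 = 2 ∨ runCount x % 4 = 3 := by
  obtain ⟨y, hy, rfl⟩ := hx
  have hlen := runCount_append hy (comp_ne_nil hy)
  rw [runCount_comp, head_comp hy] at hlen
  by_cases h : y.getLast hy = y.head hy
  · obtain ⟨k, hk⟩ := (odd_runCount_iff hy).mpr h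
    rw [h, if_neg (Bool.not_ne_self _).symm] at hlen
    omega
  · obtain ⟨k, hk⟩ := Nat.not_odd_iff_even.mp (mt (odd_runCount_iff hy).mp h)
    rw [if_pos (Bool.eq_not_iff.mpr h)] at hlen
    omega
end

section
/- For every k ≥ 3, the binary word 0^k 1 0 1^k 0 1 is a minimal antisquare: it is an antisquare, and every proper factor of it contains no antisquare factor other than possibly 01 and 10. -/

def W (k : ℕ) : List Bool :=
  List.replicate k false ++ [true, false] ++ List.replicate k true ++ [false, true]

def Q (k t : ℕ) : Prop := t = k ∨ (k+2 ≤ t ∧ t ≤ 2*k+1) ∨ t = 2*k+3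

lemma lenW (k : ℕ) : (W k).length = 2*k+4 := by simp [W]; omega

lemma WQ (k t : ℕ) : ((W k).getD t false = true) ↔ Q k t := by
  have hcase : t < k ∨ t = k ∨ t = k+1 ∨ (k+2 ≤ t ∧ t < 2*k+2) ∨ t = 2*k+2 ∨ t = 2*k+3 ∨ 2*k+4 ≤ t := by omega
  unfold W Q
  rcases hcase with h | h | h | ⟨h1, h2⟩ | h | h | h
  · rw [List.getD_append _ _ _ _ (by simp; omega), List.getD_append _ _ _ _ (by simp; omega),
      List.getD_append _ _ _ _ (by simpa using h), List.getD_eq_getElem _ _ (by simpa using h),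
      List.getElem_replicate]
    simp; omega
  · subst h
    rw [List.getD_append _ _ _ _ (by simp), List.getD_append _ _ _ _ (by simp),
      List.getD_append_right _ _ _ _ (by simp)]
    simp
  · subst h
    rw [List.getD_append _ _ _ _ (by simp), List.getD_append _ _ _ _ (by simp),
      List.getD_append_right _ _ _ _ (by simp)]
    simp only [List.length_replicate]
    rw [show k + 1 - k = 1 from by omega]
    simp; omega
  · rw [List.getD_append _ _ _ _ (by simp; omega),
      List.getD_append_right _ _ _ _ (by simp; omega),
      List.getD_eq_getElem _ _ (by simp; omega), List.getElem_replicate]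
    simp; omega
  · subst h
    rw [List.getD_append_right _ _ _ _ (by simp; omega)]
    simp only [List.length_append, List.length_replicate, List.length_cons, List.length_nil]
    rw [show 2*k+2 - (k + (0 + 1 + 1) + k) = 0 from by omega]
    simp; omega
  · subst h
    rw [List.getD_append_right _ _ _ _ (by simp; omega)]
    simp only [List.length_append, List.length_replicate, List.length_cons, List.length_nil]
    rw [show 2*k+3 - (k + (0 + 1 + 1) + k) = 1 from by omega]
    simp
  · rw [List.getD_eq_default _ _ (by simp; omega)]
    simp; omega

lemma core_s15 (k i m : ℕ) (hk : 3 ≤ k) (hm : 2 ≤ m) (hlen : i + 2*m ≤ 2*k+4)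
    (H : ∀ j, j < m → (Q k (i+j) ↔ ¬ Q k (i+j+m))) : i = 0 ∧ m = k+2 := by
  by_cases hsw : ∃ t, i ≤ t ∧ t + 2 ≤ i + m ∧ ¬ (Q k t ↔ Q k (t+1))
  · obtain ⟨t, ht1, ht2, ht3⟩ := hsw
    have e1 := H (t - i) (by omega)
    have e2 := H (t - i + 1) (by omega)
    have hcase : (m = 2 ∧ i = k - 1) ∨ (m = k ∧ 3 ≤ i ∧ i ≤ k+1) ∨ (m = k+1 ∧ i ≤ 2)
        ∨ (i = 0 ∧ m = k+2) := by
      unfold Q at ht3 e1 e2; omega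
    rcases hcase with ⟨hm2, hi⟩ | ⟨hmk, hi3, hik⟩ | ⟨hmk, hi⟩ | h
    · have h0 := H 0 (by omega); unfold Q at h0; omega
    · by_cases hik' : i ≤ k
      · have h := H (k - i) (by omega); unfold Q at h; omega
      · have h := H (2*k - i) (by omega); unfold Q at h; omega
    · have h := H (k - i) (by omega); unfold Q at h; omega
    · exact h
  · push_neg at hsw
    exfalso
    have s1 := hsw i le_rfl (by omega)
    have s2 := hsw (i+m-2) (by omega) (by omega)
    have h0 := H 0 (by omega)
    have h1 := H 1 (by omega)
    have hA := H (m-2) (by omega)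
    have hB := H (m-1) (by omega)
    unfold Q at s1 s2 h0 h1 hA hB
    omega

lemma comp_getD (y : List Bool) (j : ℕ) (hj : j < y.length) :
    (comp y).getD j false = !(y.getD j false) := by
  rw [List.getD_eq_getElem _ _ (by simpa [comp] using hj), List.getD_eq_getElem _ _ hj]
  simp [comp]


/-- for k ≥ 3, the word 0^k 1 0 1^k 0 1 is a minimal antisquare. -/
theorem stmt_15 (k : ℕ) (hk : 3 ≤ k) :
    MinAnti (List.replicate k false ++ [true, false] ++
             List.replicate k true ++ [false, true]) := by
  show MinAnti (W k)
  constructor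
  · refine ⟨List.replicate k false ++ [true, false], by simp, ?_⟩
    simp [W, comp, List.map_replicate, List.append_assoc]
  · intro u hu hne v hv hA
    obtain ⟨y, hy0, hyv⟩ := hA
    by_cases hm1 : y.length = 1
    · obtain ⟨b, rfl⟩ := List.length_eq_one_iff.mp hm1
      cases b
      · left; simpa [comp] using hyv
      · right; simpa [comp] using hyv
    · exfalso
      have hm2 : 2 ≤ y.length := by
        have := List.length_pos_iff.mpr hy0; omega
      set m := y.length with hmdef
      have hv' : v <:+: W k := hv.trans hu
      obtain ⟨s, t, hst⟩ := hv'
      have hvlen : v.length = 2*m := by simp [hyv, comp]; omega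
      have hlen : s.length + 2*m + t.length = 2*k+4 := by
        have := congrArg List.length hst
        simp [lenW] at this
        omega
      -- pointwise values
      have hget1 : ∀ j, j < m → (W k).getD (s.length + j) false = y.getD j false := by
        intro j hj
        rw [← hst, List.getD_append _ _ _ _ (by simp [hvlen]; omega),
          List.getD_append_right _ _ _ _ (by omega),
          show s.length + j - s.length = j from by omega, hyv,
          List.getD_append _ _ _ _ (by omega)]
      have hget2 : ∀ j, j < m → (W k).getD (s.length + j + m) false = !(y.getD j false) := by
        intro j hj
        rw [← hst, List.getD_append _ _ _ _ (by simp [hvlen]; omega),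
          List.getD_append_right _ _ _ _ (by omega),
          show s.length + j + m - s.length = m + j from by omega, hyv,
          List.getD_append_right _ _ _ _ (by omega),
          show m + j - y.length = j from by omega,
          comp_getD _ _ hj]
      have H : ∀ j, j < m → (Q k (s.length + j) ↔ ¬ Q k (s.length + j + m)) := by
        intro j hj
        rw [← WQ, ← WQ, hget1 j hj, hget2 j hj]
        cases y.getD j false <;> simp
      obtain ⟨hi0, hmk⟩ := core_s15 k s.length m hk hm2 (by omega) H
      -- v has full length, so v = W k
      have hvW : v <:+: W k := ⟨s, t, hst⟩
      have hveq : v = W k := hvW.eq_of_length (by rw [hvlen, lenW]; omega)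
      have huw : u = W k := by
        have h1 : u.length ≤ (W k).length := hu.length_le
        have h2 : (W k).length ≤ u.length := by rw [← hveq]; exact hv.length_le
        exact hu.eq_of_length (by omega)
      exact hne huw
end

section
/- If a bi-infinite binary word w is good (its only antisquare factors are among 01 and 10) and contains 001011 as a factor, then w = ^ω0 1 0 1^ω; that is, there exists an index i ∈ ℤ such that w(j) = 0 for all j < i, w(i) = 1, w(i+1) = 0, and w(j) = 1 for all j > i+1. -/
lemma anti_len (w : ℤ → Bool)
    (hgood : ∀ u, FactorBi u w → Antisquare u → u = [false, true] ∨ u = [true, false])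
    (p : ℤ) (k : ℕ) (hk : 2 ≤ k)
    (h : ∀ t : ℕ, t < k → w (p + (k : ℤ) + (t : ℤ)) = ! w (p + (t : ℤ))) : False := by
  set y : List Bool := (List.range k).map (fun t : ℕ => w (p + (t : ℤ))) with hy
  have hcomp : comp y = (List.range k).map (fun t : ℕ => w (p + (k : ℤ) + (t : ℤ))) := by
    unfold comp
    rw [hy, List.map_map]
    apply List.map_congr_left
    intro t ht
    simp only [Function.comp]
    rw [h t (List.mem_range.mp ht)]
  have hfac2 : FactorBi (y ++ comp y) w := by
    refine ⟨p, ?_⟩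
    have hlen : (y ++ comp y).length = k + k := by simp [hy, comp]
    rw [hlen]
    simp only [bind_pure_comp, List.map_eq_map, List.map_map, List.range_add, List.map_append]
    congr 1
    rw [hcomp]
    apply List.map_congr_left
    intro t _
    simp only [Function.comp]
    congr 1
    push_cast
    ring
  have hanti : Antisquare (y ++ comp y) := by
    refine ⟨y, ?_, rfl⟩
    intro h0
    have : y.length = k := by simp [hy]
    rw [h0] at this
    simp at this
    omega
  rcases hgood _ hfac2 hanti with h2 | h2 <;>
  · have := congrArg List.length h2
    simp [hy, comp] at this
    omega


/-- a good bi-infinite binary word containing 001011 must be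
^ω0 1 0 1^ω. -/
theorem stmt_16 (w : ℤ → Bool)
    (hgood : ∀ u, FactorBi u w → Antisquare u → u = [false, true] ∨ u = [true, false])
    (hfac : FactorBi [false, false, true, false, true, true] w) :
    ∃ i : ℤ, (∀ j < i, w j = false) ∧ w i = true ∧ w (i + 1) = false ∧
      ∀ j > i + 1, w j = true := by
  obtain ⟨i, hi⟩ := hfac
  norm_num [List.range_succ] at hi
  obtain ⟨h0, h1, h2, h3, h4, h5⟩ := hi
  have key : ∀ n : ℕ, (∀ t : ℕ, t ≤ n + 1 → w (i + 1 - (t : ℤ)) = false) ∧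
      (∀ t : ℕ, t ≤ n + 1 → w (i + 4 + (t : ℤ)) = true) := by
    intro n
    induction n with
    | zero =>
      constructor <;> intro t ht
      · have : t = 0 ∨ t = 1 := by omega
        rcases this with rfl | rfl
        · rw [show i + 1 - ((0 : ℕ) : ℤ) = i + 1 by omega]; exact h1
        · rw [show i + 1 - ((1 : ℕ) : ℤ) = i by omega]; exact h0
      · have : t = 0 ∨ t = 1 := by omega
        rcases this with rfl | rfl
        · rw [show i + 4 + ((0 : ℕ) : ℤ) = i + 4 by omega]; exact h4
        · rw [show i + 4 + ((1 : ℕ) : ℤ) = i + 5 by omega]; exact h5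
    | succ n ih =>
      obtain ⟨ihL0, ihR0⟩ := ih
      -- integer-indexed versions
      have ihL : ∀ j : ℤ, i - n ≤ j → j ≤ i + 1 → w j = false := by
        intro j hj1 hj2
        have := ihL0 (i + 1 - j).toNat (by omega)
        rwa [show i + 1 - (((i + 1 - j).toNat : ℕ) : ℤ) = j by omega] at this
      have ihR : ∀ j : ℤ, i + 4 ≤ j → j ≤ i + 5 + n → w j = true := by
        intro j hj1 hj2
        have := ihR0 (j - (i + 4)).toNat (by omega)
        rwa [show i + 4 + (((j - (i + 4)).toNat : ℕ) : ℤ) = j by omega] at this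
      have newL : w (i - (n : ℤ) - 1) = false := by
        by_contra hc
        rw [Bool.not_eq_false] at hc
        cases hx : w (i - (n : ℤ) - 2) with
        | true =>
          refine anti_len w hgood (i - (n : ℤ) - 2) 2 le_rfl ?_
          intro t ht
          have : t = 0 ∨ t = 1 := by omega
          rcases this with rfl | rfl
          · rw [show i - (n : ℤ) - 2 + ((2 : ℕ) : ℤ) + ((0 : ℕ) : ℤ) = i - n by omega,
              show i - (n : ℤ) - 2 + ((0 : ℕ) : ℤ) = i - (n : ℤ) - 2 by omega,
              ihL (i - n) (by omega) (by omega), hx]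
            rfl
          · rw [show i - (n : ℤ) - 2 + ((2 : ℕ) : ℤ) + ((1 : ℕ) : ℤ) = i - n + 1 by omega,
              show i - (n : ℤ) - 2 + ((1 : ℕ) : ℤ) = i - (n : ℤ) - 1 by omega,
              ihL (i - n + 1) (by omega) (by omega), hc]
            rfl
        | false =>
          refine anti_len w hgood (i - (n : ℤ) - 2) (n + 4) (by omega) ?_
          intro t ht
          rcases Nat.lt_or_ge t 2 with h1t | h1t
          · have : t = 0 ∨ t = 1 := by omega
            rcases this with rfl | rfl
            · rw [show i - (n : ℤ) - 2 + (((n + 4 : ℕ) : ℕ) : ℤ) + ((0 : ℕ) : ℤ) = i + 2 by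
                push_cast; ring,
                show i - (n : ℤ) - 2 + ((0 : ℕ) : ℤ) = i - (n : ℤ) - 2 by omega, h2, hx]
              rfl
            · rw [show i - (n : ℤ) - 2 + (((n + 4 : ℕ) : ℕ) : ℤ) + ((1 : ℕ) : ℤ) = i + 3 by
                push_cast; ring,
                show i - (n : ℤ) - 2 + ((1 : ℕ) : ℤ) = i - (n : ℤ) - 1 by omega, h3, hc]
              rfl
          · rw [ihR (i - (n : ℤ) - 2 + (((n + 4 : ℕ) : ℕ) : ℤ) + (t : ℤ)) (by omega) (by omega),
              ihL (i - (n : ℤ) - 2 + (t : ℤ)) (by omega) (by omega)]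
            rfl
      have newR : w (i + 6 + (n : ℤ)) = true := by
        by_contra hc
        rw [Bool.not_eq_true] at hc
        cases hx : w (i + 7 + (n : ℤ)) with
        | false =>
          refine anti_len w hgood (i + 4 + (n : ℤ)) 2 le_rfl ?_
          intro t ht
          have : t = 0 ∨ t = 1 := by omega
          rcases this with rfl | rfl
          · rw [show i + 4 + (n : ℤ) + ((2 : ℕ) : ℤ) + ((0 : ℕ) : ℤ) = i + 6 + n by omega,
              show i + 4 + (n : ℤ) + ((0 : ℕ) : ℤ) = i + 4 + (n : ℤ) by omega,
              hc, ihR (i + 4 + n) (by omega) (by omega)]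
            rfl
          · rw [show i + 4 + (n : ℤ) + ((2 : ℕ) : ℤ) + ((1 : ℕ) : ℤ) = i + 7 + n by omega,
              show i + 4 + (n : ℤ) + ((1 : ℕ) : ℤ) = i + 5 + n by omega,
              hx, ihR (i + 5 + n) (by omega) (by omega)]
            rfl
        | true =>
          refine anti_len w hgood (i - (n : ℤ)) (n + 4) (by omega) ?_
          intro t ht
          rcases Nat.lt_or_ge t (n + 2) with h1t | h1t
          · rw [ihR (i - (n : ℤ) + (((n + 4 : ℕ) : ℕ) : ℤ) + (t : ℤ)) (by omega) (by omega),
              ihL (i - (n : ℤ) + (t : ℤ)) (by omega) (by omega)]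
            rfl
          · have : t = n + 2 ∨ t = n + 3 := by omega
            rcases this with rfl | rfl
            · rw [show i - (n : ℤ) + (((n + 4 : ℕ) : ℕ) : ℤ) + (((n + 2 : ℕ) : ℕ) : ℤ) =
                i + 6 + n by push_cast; ring,
                show i - (n : ℤ) + (((n + 2 : ℕ) : ℕ) : ℤ) = i + 2 by push_cast; ring, hc, h2]
              rfl
            · rw [show i - (n : ℤ) + (((n + 4 : ℕ) : ℕ) : ℤ) + (((n + 3 : ℕ) : ℕ) : ℤ) =
                i + 7 + n by push_cast; ring,
                show i - (n : ℤ) + (((n + 3 : ℕ) : ℕ) : ℤ) = i + 3 by push_cast; ring, hx, h3]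
              rfl
      constructor <;> intro t ht
      · rcases Nat.lt_or_ge t (n + 2) with h1t | h1t
        · exact ihL0 t (by omega)
        · have : t = n + 2 := by omega
          subst this
          rw [show i + 1 - (((n + 2 : ℕ) : ℕ) : ℤ) = i - (n : ℤ) - 1 by push_cast; ring]
          exact newL
      · rcases Nat.lt_or_ge t (n + 2) with h1t | h1t
        · exact ihR0 t (by omega)
        · have : t = n + 2 := by omega
          subst this
          rw [show i + 4 + (((n + 2 : ℕ) : ℕ) : ℤ) = i + 6 + (n : ℤ) by push_cast; ring]
          exact newR
  refine ⟨i + 2, ?_, h2, ?_, ?_⟩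
  · intro j hj
    have := (key (i + 1 - j).toNat).1 (i + 1 - j).toNat (by omega)
    rwa [show i + 1 - (((i + 1 - j).toNat : ℕ) : ℤ) = j by omega] at this
  · rw [show i + 2 + 1 = i + 3 by ring]; exact h3
  · intro j hj
    have := (key (j - (i + 4)).toNat).2 (j - (i + 4)).toNat (by omega)
    rwa [show i + 4 + (((j - (i + 4)).toNat : ℕ) : ℤ) = j by omega] at this
end
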